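/- arXiv:1312.0451 — 11 statements merged into one kernel-verified Lean document; each statement's English description precedes it below -/
import Mathlib

section
/- Upper bound for the optimal rule (Theorem 1(i)): in the committee model, the probability of error of the Nitzan–Paroush optimal weighted majority rule satisfies P(Σ_{i=1}^n w_i η_i ≤ 0) ≤ exp(−Φ/2). -/
/-! By Chernoff's bound at `t = -1/2` and independence, the error probability is at most
`∏ᵢ E[exp (-wᵢ ηᵢ / 2)]`, and since `exp wᵢ = pᵢ / (1 - pᵢ)` the `i`-th factor equals
`2 √(pᵢ (1 - pᵢ))`. It therefore suffices to show `2 √(p (1 - p)) ≤ exp (-(p - 1/2) w / 2)`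
for each expert. In logarithmic form this is `chernoffExcess p ≤ 0`; that function is symmetric
about `p = 1/2`, vanishes there, and is antitone on `[1/2, 1)` because
`log r ≤ sinh (log r) = (r - r⁻¹) / 2` at `r = p / (1 - p)`. -/

open MeasureTheory ProbabilityTheory

open Real

lemma log_le_half_sub_inv {x : ℝ} (hx : 1 ≤ x) : log x ≤ (x - x⁻¹) / 2 := by
  rw [← sinh_log (by positivity)]
  exact self_le_sinh_iff.mpr (log_nonneg hx)

noncomputable def chernoffExcess (p : ℝ) : ℝ :=
  log 4 + log p + log (1 - p) + (p - 1 / 2) * (log p - log (1 - p))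

lemma chernoffExcess_one_sub (p : ℝ) : chernoffExcess (1 - p) = chernoffExcess p := by
  unfold chernoffExcess
  rw [sub_sub_cancel]
  ring

lemma chernoffExcess_half : chernoffExcess (1 / 2) = 0 := by
  have h : (1 : ℝ) - 1 / 2 = 2⁻¹ := by norm_num
  rw [chernoffExcess, h, one_div, log_inv, show (4 : ℝ) = 2 ^ 2 by norm_num, log_pow]
  ring

lemma hasDerivAt_chernoffExcess {x : ℝ} (hx₀ : 0 < x) (hx₁ : x < 1) :
    HasDerivAt chernoffExcess (log x - log (1 - x) - (x - 1 / 2) / (x * (1 - x))) x := by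
  have hq : 1 - x ≠ 0 := by linarith
  have hlog : HasDerivAt (fun y => log y) x⁻¹ x := hasDerivAt_log hx₀.ne'
  have hlog₁ : HasDerivAt (fun y => log (1 - y)) (-1 / (1 - x)) x :=
    ((hasDerivAt_id x).const_sub 1).log hq
  refine (((hlog.const_add (log 4)).add hlog₁).add
    (((hasDerivAt_id x).sub_const (1 / 2)).mul (hlog.sub hlog₁))).congr_deriv ?_
  simp only [id, Pi.sub_apply]
  field_simp
  ring

lemma chernoffExcess_deriv_nonpos {x : ℝ} (hx₀ : 1 / 2 ≤ x) (hx₁ : x < 1) :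
    log x - log (1 - x) - (x - 1 / 2) / (x * (1 - x)) ≤ 0 := by
  have hq : 0 < 1 - x := by linarith
  have hp : 0 < x := by linarith
  have h := log_le_half_sub_inv ((one_le_div hq).mpr (by linarith))
  rw [log_div hp.ne' hq.ne', inv_div] at h
  convert sub_nonpos.mpr h using 2
  field_simp
  ring

lemma antitoneOn_chernoffExcess : AntitoneOn chernoffExcess (Set.Ico (1 / 2) 1) := by
  refine antitoneOn_of_hasDerivWithinAt_nonpos
    (f' := fun x => log x - log (1 - x) - (x - 1 / 2) / (x * (1 - x))) (convex_Ico _ _) ?_ ?_ ?_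
  · intro x hx
    exact (hasDerivAt_chernoffExcess (by linarith [hx.1]) hx.2).continuousAt.continuousWithinAt
  · intro x hx
    rw [interior_Ico] at hx
    exact (hasDerivAt_chernoffExcess (by linarith [hx.1]) hx.2).hasDerivWithinAt
  · intro x hx
    rw [interior_Ico] at hx
    exact chernoffExcess_deriv_nonpos hx.1.le hx.2

lemma chernoffExcess_nonpos {p : ℝ} (hp₀ : 0 < p) (hp₁ : p < 1) : chernoffExcess p ≤ 0 := by
  wlog hp : 1 / 2 ≤ p generalizing p
  · rw [← chernoffExcess_one_sub]
    exact this (by linarith) (by linarith) (by linarith)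
  rw [← chernoffExcess_half]
  exact antitoneOn_chernoffExcess ⟨le_rfl, by norm_num⟩ ⟨hp, hp₁⟩ hp

lemma mul_exp_neg_half_logit_add_le {p : ℝ} (hp₀ : 0 < p) (hp₁ : p < 1) :
    p * exp (-(log (p / (1 - p)) / 2)) + (1 - p) * exp (log (p / (1 - p)) / 2)
      ≤ exp (-((p - 1 / 2) * log (p / (1 - p))) / 2) := by
  have hq : 0 < 1 - p := by linarith
  have hterm : ∀ a b : ℝ, 0 < a → 0 < b →
      a * exp ((log b - log a) / 2) = exp ((log a + log b) / 2) := by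
    intro a b ha hb
    rw [← exp_log ha, ← exp_add, log_exp]
    ring_nf
  rw [log_div hp₀.ne' hq.ne', ← neg_div, neg_sub, hterm _ _ hp₀ hq,
    hterm _ _ hq hp₀, add_comm (log (1 - p)), ← two_mul,
    show (2 : ℝ) * exp ((log p + log (1 - p)) / 2) = exp (log 2 + (log p + log (1 - p)) / 2) by
      rw [exp_add, exp_log two_pos], exp_le_exp]
  have h4 : log 4 = 2 * log 2 := by
    rw [show (4 : ℝ) = 2 ^ 2 by norm_num, log_pow]; push_cast; ring
  have := chernoffExcess_nonpos hp₀ hp₁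
  rw [chernoffExcess, h4] at this
  linarith

section SignVariable

variable {Ω : Type*} {η : Ω → ℝ}

lemma comp_eq_indicator_add_const (hη : ∀ ω, η ω = 1 ∨ η ω = -1) (f : ℝ → ℝ) :
    (fun ω => f (η ω)) = fun ω => {ω | η ω = 1}.indicator (fun _ => f 1 - f (-1)) ω + f (-1) := by
  funext ω
  rcases hη ω with h | h
  · simp [h]
  · simp [h, show (-1 : ℝ) ≠ 1 by norm_num]

lemma integrable_comp_of_eq_one_or_eq_neg_one [MeasurableSpace Ω] {μ : Measure Ω}
    [IsFiniteMeasure μ] (hmeas : Measurable η) (hη : ∀ ω, η ω = 1 ∨ η ω = -1) (f : ℝ → ℝ) :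
    Integrable (fun ω => f (η ω)) μ := by
  rw [comp_eq_indicator_add_const hη]
  exact ((integrable_const _).indicator (hmeas (measurableSet_singleton 1))).add
    (integrable_const _)

lemma integral_comp_of_eq_one_or_eq_neg_one [MeasurableSpace Ω] {μ : Measure Ω}
    [IsProbabilityMeasure μ] (hmeas : Measurable η)
    (hη : ∀ ω, η ω = 1 ∨ η ω = -1) (f : ℝ → ℝ) :
    ∫ ω, f (η ω) ∂μ = μ.real {ω | η ω = 1} * f 1 + (1 - μ.real {ω | η ω = 1}) * f (-1) := by
  have hA : MeasurableSet {ω | η ω = 1} := hmeas (measurableSet_singleton 1)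
  rw [comp_eq_indicator_add_const hη, integral_add ((integrable_const _).indicator hA)
    (integrable_const _), integral_indicator_const _ hA, integral_const, probReal_univ,
    smul_eq_mul, smul_eq_mul]
  ring

end SignVariable

lemma measure_sum_nonpos_le_prod_mgf {Ω ι : Type*} [MeasurableSpace Ω] {μ : Measure Ω}
    [Fintype ι] {X : ι → Ω → ℝ} (hind : iIndepFun X μ) (hmeas : ∀ i, Measurable (X i))
    {t : ℝ} (ht : t ≤ 0) (hint : ∀ i, Integrable (fun ω => exp (t * X i ω)) μ) :
    μ {ω | ∑ i, X i ω ≤ 0} ≤ ENNReal.ofReal (∏ i, mgf (X i) μ t) := by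
  have := hind.isProbabilityMeasure
  have hchernoff := measure_le_le_exp_mul_mgf 0 ht
    (hind.integrable_exp_mul_sum hmeas (s := Finset.univ) fun i _ => hint i)
  rw [mul_zero, exp_zero, one_mul, hind.mgf_sum hmeas] at hchernoff
  rw [← ofReal_measureReal]
  refine ENNReal.ofReal_le_ofReal (le_of_eq_of_le ?_ hchernoff)
  simp only [Finset.sum_apply]

theorem optimal_rule_error_upper_bound_general
    {Ω : Type*} [MeasurableSpace Ω] (μ : Measure Ω) [IsProbabilityMeasure μ]
    (n : ℕ)
    (p : Fin n → ℝ) (hp : ∀ i, p i ∈ Set.Ioo (0 : ℝ) 1)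
    (η : Fin n → Ω → ℝ)
    (hηmeas : ∀ i, Measurable (η i))
    (hηval : ∀ i ω, η i ω = 1 ∨ η i ω = -1)
    (hηprob : ∀ i, μ {ω | η i ω = 1} = ENNReal.ofReal (p i))
    (hηind : iIndepFun η μ)
    (w : Fin n → ℝ) (hw : ∀ i, w i = Real.log (p i / (1 - p i)))
    (Φ : ℝ) (hΦ : Φ = ∑ i, (p i - 1/2) * w i) :
    μ {ω | ∑ i, w i * η i ω ≤ 0} ≤ ENNReal.ofReal (Real.exp (-Φ / 2)) := by
  set X : Fin n → Ω → ℝ := fun i ω => w i * η i ω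
  have hXmeas : ∀ i, Measurable (X i) := fun i => (hηmeas i).const_mul (w i)
  have hmgf : ∀ i, mgf (X i) μ (-(1 / 2))
      = p i * exp (-(w i / 2)) + (1 - p i) * exp (w i / 2) := fun i => by
    rw [mgf, integral_comp_of_eq_one_or_eq_neg_one (hηmeas i) (hηval i)
      (fun x => exp (-(1 / 2) * (w i * x))), measureReal_def, hηprob,
      ENNReal.toReal_ofReal (hp i).1.le]
    ring_nf
  calc μ {ω | ∑ i, X i ω ≤ 0}
      ≤ ENNReal.ofReal (∏ i, mgf (X i) μ (-(1 / 2))) :=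
        measure_sum_nonpos_le_prod_mgf (hηind.comp _ fun i => measurable_const_mul (w i))
          hXmeas (by norm_num) fun i => integrable_comp_of_eq_one_or_eq_neg_one (hηmeas i)
            (hηval i) (fun x => exp (-(1 / 2) * (w i * x)))
    _ ≤ ENNReal.ofReal (∏ i, exp (-((p i - 1 / 2) * w i) / 2)) := by
        refine ENNReal.ofReal_le_ofReal (Finset.prod_le_prod (fun i _ => mgf_nonneg) fun i _ => ?_)
        rw [hmgf, hw]
        exact mul_exp_neg_half_logit_add_le (hp i).1 (hp i).2
    _ = ENNReal.ofReal (exp (-Φ / 2)) := by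
        rw [← exp_sum, hΦ, ← Finset.sum_neg_distrib, Finset.sum_div]

/-- Theorem 1(i): upper bound on the error probability of the Nitzan–Paroush
optimal weighted majority rule. -/
theorem optimal_rule_error_upper_bound
    {Ω : Type*} [MeasurableSpace Ω] (μ : Measure Ω) [IsProbabilityMeasure μ]
    (n : ℕ) (hn : 1 ≤ n)
    (p : Fin n → ℝ) (hp : ∀ i, p i ∈ Set.Ioo (0 : ℝ) 1)
    (η : Fin n → Ω → ℝ)
    (hηmeas : ∀ i, Measurable (η i))
    (hηval : ∀ i ω, η i ω = 1 ∨ η i ω = -1)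
    (hηprob : ∀ i, μ {ω | η i ω = 1} = ENNReal.ofReal (p i))
    (hηind : iIndepFun η μ)
    (w : Fin n → ℝ) (hw : ∀ i, w i = Real.log (p i / (1 - p i)))
    (Φ : ℝ) (hΦ : Φ = ∑ i, (p i - 1/2) * w i) :
    μ {ω | ∑ i, w i * η i ω ≤ 0} ≤ ENNReal.ofReal (Real.exp (-Φ / 2)) :=
  optimal_rule_error_upper_bound_general μ n p hp η hηmeas hηval hηprob hηind w hw Φ hΦ
end

section
/- Lower bound for the optimal rule (Theorem 1(ii)): in the committee model, the probability of error of the Nitzan–Paroush optimal weighted majority rule satisfies P(Σ_{i=1}^n w_i η_i ≤ 0) ≥ 3 / (4 · (1 + exp(2Φ + 4√Φ))). -/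
/-!
Write `X = ∑ wᵢηᵢ` and compare the law `P = configProb p` of the vote pattern with the law
`Q = configProb (1 - p)` of the reversed votes `-η`. The likelihood ratio is `dQ/dP = exp (-X)`,
and by symmetry `Q(X ≤ 0) = P(X ≥ 0) ≥ 1 - a`, where `a = P(X ≤ 0)` is the error probability.
Under `Q` the score has mean `-2Φ` and variance `∑ 4pᵢqᵢwᵢ² ≤ 4Φ` (as `sinh wᵢ = (pᵢ - 1/2)/(pᵢqᵢ)`,
the bound `pᵢqᵢwᵢ² ≤ (pᵢ - 1/2)wᵢ` is `wᵢ (sinh wᵢ - wᵢ) ≥ 0`), so by Chebyshev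
`Q(X < -(2Φ + 4√Φ)) ≤ 1/4`. On the remaining part of `{X ≤ 0}` we have `Q ≤ exp (2Φ + 4√Φ) • P`,
hence `1 - a ≤ 1/4 + exp (2Φ + 4√Φ) a`.
-/

open MeasureTheory ProbabilityTheory Finset Real

namespace CommitteeVoting

variable {ι : Type*}

def voteSign (b : Bool) : ℝ := if b then 1 else -1

noncomputable def votePattern {Ω : Type*} (η : ι → Ω → ℝ) (ω : Ω) : ι → Bool :=
  fun i => decide (η i ω = 1)

lemma voteSign_votePattern {Ω : Type*} {η : ι → Ω → ℝ} (hval : ∀ i ω, η i ω = 1 ∨ η i ω = -1)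
    (ω : Ω) (i : ι) : voteSign (votePattern η ω i) = η i ω := by
  rcases hval i ω with h | h <;> norm_num [votePattern, voteSign, h]

lemma measurable_decide_eq_one : Measurable fun x : ℝ => decide (x = 1) :=
  measurable_to_bool <| by
    simpa only [Set.preimage, Set.mem_singleton_iff, decide_eq_true_eq,
      Set.ofPred_eq_eq_singleton] using measurableSet_singleton (1 : ℝ)

lemma measurable_votePattern {Ω : Type*} [MeasurableSpace Ω] {η : ι → Ω → ℝ}
    (hmeas : ∀ i, Measurable (η i)) : Measurable (votePattern η) :=
  measurable_pi_lambda _ fun i => measurable_decide_eq_one.comp (hmeas i)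

lemma mul_sum_filter_le_sum_mul {α : Type*} (s : Finset α) {q g : α → ℝ}
    (hq : ∀ a ∈ s, 0 ≤ q a) (hg : ∀ a ∈ s, 0 ≤ g a) (c : ℝ) :
    c * ∑ a ∈ s with c ≤ g a, q a ≤ ∑ a ∈ s, q a * g a :=
  calc c * ∑ a ∈ s with c ≤ g a, q a
      = ∑ a ∈ s with c ≤ g a, q a * c := by rw [mul_sum]; simp_rw [mul_comm]
    _ ≤ ∑ a ∈ s with c ≤ g a, q a * g a :=
        sum_le_sum fun a ha => by
          rw [mem_filter] at ha
          exact mul_le_mul_of_nonneg_left ha.2 (hq a ha.1)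
    _ ≤ ∑ a ∈ s, q a * g a :=
        sum_le_sum_of_subset_of_nonneg (filter_subset _ _) fun a ha _ =>
          mul_nonneg (hq a ha) (hg a ha)

lemma mul_one_sub_mul_sq_le_of_eq_log {p w : ℝ} (hp0 : 0 < p) (hp1 : p < 1)
    (hw : w = log (p / (1 - p))) : p * (1 - p) * w ^ 2 ≤ (p - 1 / 2) * w := by
  have hq0 : 0 < 1 - p := by linarith
  have hsinh : sinh w = (p - 1 / 2) / (p * (1 - p)) := by
    rw [hw, sinh_log (by positivity)]
    field_simp
    ring
  have hsign : 0 ≤ w * (sinh w - w) := by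
    rcases le_total 0 w with h | h
    · exact mul_nonneg h (sub_nonneg.2 (self_le_sinh_iff.2 h))
    · exact mul_nonneg_of_nonpos_of_nonpos h (sub_nonpos.2 (sinh_le_self_iff.2 h))
  have : (p - 1 / 2) * w - p * (1 - p) * w ^ 2 = p * (1 - p) * (w * (sinh w - w)) := by
    rw [hsinh]
    field_simp
  linarith [mul_nonneg (mul_pos hp0 hq0).le hsign]

lemma sub_half_mul_nonneg_of_eq_log {p w : ℝ} (hp0 : 0 < p) (hp1 : p < 1)
    (hw : w = log (p / (1 - p))) : 0 ≤ (p - 1 / 2) * w :=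
  le_trans (by have : 0 < 1 - p := sub_pos.2 hp1; positivity)
    (mul_one_sub_mul_sq_le_of_eq_log hp0 hp1 hw)

variable [Fintype ι]

def configProb (p : ι → ℝ) (f : ι → Bool) : ℝ := ∏ i, if f i then p i else 1 - p i

def score (w : ι → ℝ) (f : ι → Bool) : ℝ := ∑ i, w i * voteSign (f i)

noncomputable def potential (p w : ι → ℝ) : ℝ := ∑ i, (p i - 1 / 2) * w i

lemma configProb_nonneg {p : ι → ℝ} (hp : ∀ i, p i ∈ Set.Icc (0 : ℝ) 1) (f : ι → Bool) :
    0 ≤ configProb p f :=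
  prod_nonneg fun i _ => by
    obtain ⟨hp0, hp1⟩ := hp i
    split <;> linarith

lemma configProb_not (p : ι → ℝ) (f : ι → Bool) :
    configProb p (fun i => !f i) = configProb (1 - p) f := by
  refine prod_congr rfl fun i _ => ?_
  cases h : f i <;> simp [h]

lemma score_not (w : ι → ℝ) (f : ι → Bool) : score w (fun i => !f i) = -score w f := by
  simp only [score, ← sum_neg_distrib]
  refine sum_congr rfl fun i _ => ?_
  cases f i <;> simp [voteSign]

lemma configProb_one_sub_nonneg {p : ι → ℝ} (hp : ∀ i, p i ∈ Set.Icc (0 : ℝ) 1)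
    (f : ι → Bool) : 0 ≤ configProb (1 - p) f :=
  configProb_nonneg (fun i => ⟨sub_nonneg.2 (hp i).2, sub_le_self _ (hp i).1⟩) f

section Moments

variable [DecidableEq ι]

lemma sum_configProb_mul_prod (p : ι → ℝ) (g : ι → Bool → ℝ) :
    ∑ f, configProb p f * ∏ i, g i (f i) = ∏ i, (p i * g i true + (1 - p i) * g i false) := by
  simp_rw [configProb, ← prod_mul_distrib]
  refine (Fintype.prod_sum fun i b => (if b then p i else 1 - p i) * g i b).symm.trans ?_
  simp

lemma sum_configProb (p : ι → ℝ) : ∑ f, configProb p f = 1 := by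
  simpa using sum_configProb_mul_prod p 1

lemma sum_configProb_mul_apply (p : ι → ℝ) (i : ι) (c : Bool → ℝ) :
    ∑ f, configProb p f * c (f i) = p i * c true + (1 - p i) * c false := by
  have key := sum_configProb_mul_prod p (fun k b => if k = i then c b else 1)
  rw [Fintype.prod_eq_single i (by simp +contextual)] at key
  simpa using key

lemma sum_configProb_mul_apply_mul_apply (p : ι → ℝ) {i j : ι} (hij : i ≠ j) (c d : Bool → ℝ) :
    ∑ f, configProb p f * (c (f i) * d (f j)) =
      (p i * c true + (1 - p i) * c false) * (p j * d true + (1 - p j) * d false) := by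
  have key := sum_configProb_mul_prod p
    (fun k b => (if k = i then c b else 1) * (if k = j then d b else 1))
  simp only [prod_mul_distrib, Fintype.prod_ite_eq'] at key
  rw [Fintype.prod_eq_mul i j hij (by simp +contextual)] at key
  simpa [hij, hij.symm] using key

lemma sum_configProb_mul_sq_sum (p : ι → ℝ) (c : ι → Bool → ℝ)
    (hc : ∀ i, p i * c i true + (1 - p i) * c i false = 0) :
    ∑ f, configProb p f * (∑ i, c i (f i)) ^ 2 =
      ∑ i, (p i * c i true ^ 2 + (1 - p i) * c i false ^ 2) := by
  calc ∑ f, configProb p f * (∑ i, c i (f i)) ^ 2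
      = ∑ i, ∑ j, ∑ f, configProb p f * (c i (f i) * c j (f j)) := by
        simp_rw [sq, sum_mul_sum, mul_sum]
        rw [sum_comm]
        exact sum_congr rfl fun i _ => sum_comm
    _ = ∑ i, ∑ f, configProb p f * (c i (f i) * c i (f i)) := by
        refine sum_congr rfl fun i _ => sum_eq_single i (fun j _ hji => ?_) (by simp)
        rw [sum_configProb_mul_apply_mul_apply p hji.symm, hc, zero_mul]
    _ = ∑ i, (p i * c i true ^ 2 + (1 - p i) * c i false ^ 2) := by
        refine sum_congr rfl fun i _ => ?_
        rw [sum_configProb_mul_apply p i fun b => c i b * c i b]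
        ring

lemma one_sub_le_sum_configProb_one_sub_filter_score_nonpos {p : ι → ℝ}
    (hp : ∀ i, p i ∈ Set.Icc (0 : ℝ) 1) (w : ι → ℝ) :
    1 - ∑ f with score w f ≤ 0, configProb p f ≤
      ∑ f with score w f ≤ 0, configProb (1 - p) f := by
  have hflip : ∑ f with score w f ≤ 0, configProb (1 - p) f =
      ∑ f with 0 ≤ score w f, configProb p f :=
    sum_nbij' (fun f i => !f i) (fun f i => !f i) (by simp [score_not]) (by simp [score_not])
      (by simp) (by simp) fun f _ => (configProb_not p f).symm
  have hsplit := sum_filter_add_sum_filter_not univ (fun f => score w f ≤ 0) (configProb p)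
  rw [sum_configProb] at hsplit
  have : ∑ f with ¬ score w f ≤ 0, configProb p f ≤ ∑ f with 0 ≤ score w f, configProb p f :=
    sum_le_sum_of_subset_of_nonneg (fun f => by simp only [mem_filter]; grind)
      fun f _ _ => configProb_nonneg hp f
  linarith

end Moments

section Logit

variable {p w : ι → ℝ}

lemma configProb_one_sub_eq_mul_exp_neg_score (hp : ∀ i, p i ∈ Set.Ioo (0 : ℝ) 1)
    (hw : ∀ i, w i = log (p i / (1 - p i))) (f : ι → Bool) :
    configProb (1 - p) f = configProb p f * exp (-score w f) := by
  rw [score, ← sum_neg_distrib, exp_sum, configProb, configProb, ← prod_mul_distrib]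
  refine prod_congr rfl fun i _ => ?_
  obtain ⟨hp0, hp1⟩ := hp i
  have hexp : exp (w i) = p i / (1 - p i) := by rw [hw i, exp_log (by field_simp; linarith)]
  cases f i
  · simp only [Pi.sub_apply, Pi.one_apply, sub_sub_cancel, voteSign, Bool.false_eq_true,
      if_false, mul_neg, mul_one, neg_neg, hexp]
    field_simp
  · simp only [Pi.sub_apply, Pi.one_apply, voteSign, if_true, mul_one, exp_neg, hexp, inv_div]
    field_simp

lemma potential_nonneg (hp : ∀ i, p i ∈ Set.Ioo (0 : ℝ) 1)
    (hw : ∀ i, w i = log (p i / (1 - p i))) : 0 ≤ potential p w :=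
  sum_nonneg fun i _ => sub_half_mul_nonneg_of_eq_log (hp i).1 (hp i).2 (hw i)

lemma eq_zero_of_potential_eq_zero (hp : ∀ i, p i ∈ Set.Ioo (0 : ℝ) 1)
    (hw : ∀ i, w i = log (p i / (1 - p i))) (h : potential p w = 0) (i : ι) : w i = 0 := by
  have hterm : (p i - 1 / 2) * w i = 0 := (sum_eq_zero_iff_of_nonneg fun j _ =>
    sub_half_mul_nonneg_of_eq_log (hp j).1 (hp j).2 (hw j)).1 h i (mem_univ i)
  have hle := mul_one_sub_mul_sq_le_of_eq_log (hp i).1 (hp i).2 (hw i)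
  rw [hterm] at hle
  have hpq : 0 < p i * (1 - p i) := mul_pos (hp i).1 (sub_pos.2 (hp i).2)
  exact pow_eq_zero_iff two_ne_zero |>.1 <|
    le_antisymm (nonpos_of_mul_nonpos_right hle hpq) (sq_nonneg _)

variable [DecidableEq ι]

lemma sum_configProb_one_sub_mul_sq_le (hp : ∀ i, p i ∈ Set.Ioo (0 : ℝ) 1)
    (hw : ∀ i, w i = log (p i / (1 - p i))) :
    ∑ f, configProb (1 - p) f * (score w f + 2 * potential p w) ^ 2 ≤ 4 * potential p w := by
  set c : ι → Bool → ℝ := fun i b => w i * voteSign b + (2 * p i - 1) * w i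
  have hcentered : ∀ f, score w f + 2 * potential p w = ∑ i, c i (f i) := fun f => by
    simp only [score, potential, mul_sum, ← sum_add_distrib]
    exact sum_congr rfl fun i _ => by ring
  simp_rw [hcentered]
  have hmean : ∀ i, (1 - p) i * c i true + (1 - (1 - p) i) * c i false = 0 := fun i => by
    simp only [Pi.sub_apply, Pi.one_apply, sub_sub_cancel, c, voteSign, if_true,
      Bool.false_eq_true, if_false]
    ring
  rw [sum_configProb_mul_sq_sum _ c hmean, potential, mul_sum]
  refine sum_le_sum fun i _ => ?_
  have := mul_one_sub_mul_sq_le_of_eq_log (hp i).1 (hp i).2 (hw i)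
  simp only [Pi.sub_apply, Pi.one_apply, sub_sub_cancel, c, voteSign, if_true,
    Bool.false_eq_true, if_false]
  nlinarith

lemma sum_configProb_one_sub_filter_score_lt_le (hp : ∀ i, p i ∈ Set.Ioo (0 : ℝ) 1)
    (hw : ∀ i, w i = log (p i / (1 - p i))) (hpos : 0 < potential p w) :
    ∑ f with score w f < -(2 * potential p w + 4 * √(potential p w)), configProb (1 - p) f
      ≤ 1 / 4 := by
  set Φ := potential p w
  have hq : ∀ f ∈ univ, 0 ≤ configProb (1 - p) f := fun f _ =>
    configProb_one_sub_nonneg (fun i => Set.Ioo_subset_Icc_self (hp i)) f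
  have hsub : univ.filter (fun f => score w f < -(2 * Φ + 4 * √Φ)) ⊆
      univ.filter (fun f => 16 * Φ ≤ (score w f + 2 * Φ) ^ 2) := by
    intro f hf
    simp only [mem_filter, mem_univ, true_and] at hf ⊢
    have hsq : (4 * √Φ) ^ 2 = 16 * Φ := by rw [mul_pow, sq_sqrt hpos.le]; norm_num
    have hlt : 4 * √Φ < -(score w f + 2 * Φ) := by linarith
    nlinarith [mul_self_le_mul_self (by positivity : 0 ≤ 4 * √Φ) hlt.le]
  have hmarkov := mul_sum_filter_le_sum_mul univ hq (fun f _ => sq_nonneg (score w f + 2 * Φ))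
    (16 * Φ)
  have hvar := sum_configProb_one_sub_mul_sq_le hp hw
  have := sum_le_sum_of_subset_of_nonneg hsub fun f hf _ => hq f (mem_univ f)
  have : 16 * Φ * ∑ f with score w f < -(2 * Φ + 4 * √Φ), configProb (1 - p) f ≤ 4 * Φ :=
    (mul_le_mul_of_nonneg_left this (by positivity)).trans (hmarkov.trans hvar)
  nlinarith

lemma three_div_four_le_mul_sum_configProb_filter_score_nonpos
    (hp : ∀ i, p i ∈ Set.Ioo (0 : ℝ) 1) (hw : ∀ i, w i = log (p i / (1 - p i)))
    (hpos : 0 < potential p w) :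
    3 / 4 ≤ (1 + exp (2 * potential p w + 4 * √(potential p w))) *
      ∑ f with score w f ≤ 0, configProb p f := by
  set x := 2 * potential p w + 4 * √(potential p w)
  set a := ∑ f with score w f ≤ 0, configProb p f
  have hp' : ∀ i, p i ∈ Set.Icc (0 : ℝ) 1 := fun i => Set.Ioo_subset_Icc_self (hp i)
  have hlow := one_sub_le_sum_configProb_one_sub_filter_score_nonpos hp' w
  have hsplit := sum_filter_add_sum_filter_not (univ.filter fun f => score w f ≤ 0)
    (fun f => score w f < -x) (configProb (1 - p))
  have htail : ∑ f ∈ univ.filter (fun f => score w f ≤ 0) with score w f < -x,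
      configProb (1 - p) f ≤ 1 / 4 :=
    (sum_le_sum_of_subset_of_nonneg (filter_subset_filter _ (subset_univ _)) fun f _ _ =>
      configProb_one_sub_nonneg hp' f).trans
      (sum_configProb_one_sub_filter_score_lt_le hp hw hpos)
  have hbulk : ∑ f ∈ univ.filter (fun f => score w f ≤ 0) with ¬ score w f < -x,
      configProb (1 - p) f ≤ exp x * a := by
    rw [mul_sum]
    refine (sum_le_sum fun f hf => ?_).trans (sum_le_sum_of_subset_of_nonneg (filter_subset _ _)
      fun f _ _ => mul_nonneg (exp_nonneg x) (configProb_nonneg hp' f))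
    rw [configProb_one_sub_eq_mul_exp_neg_score hp hw, mul_comm]
    refine mul_le_mul_of_nonneg_right (exp_le_exp.2 ?_) (configProb_nonneg hp' f)
    simp only [mem_filter] at hf
    linarith [hf.2]
  linarith

lemma le_sum_configProb_filter_score_nonpos (hp : ∀ i, p i ∈ Set.Ioo (0 : ℝ) 1)
    (hw : ∀ i, w i = log (p i / (1 - p i))) :
    3 / (4 * (1 + exp (2 * potential p w + 4 * √(potential p w)))) ≤
      ∑ f with score w f ≤ 0, configProb p f := by
  rcases (potential_nonneg hp hw).eq_or_lt with h0 | hpos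
  · have hscore : ∀ f, score w f = 0 := fun f => by
      simp [score, eq_zero_of_potential_eq_zero hp hw h0.symm]
    simp only [hscore, le_refl, filter_true, sum_configProb]
    exact div_le_one_of_le₀ (by nlinarith [exp_pos (2 * potential p w + 4 * √(potential p w))])
      (by positivity)
  · rw [div_le_iff₀ (by positivity)]
    linarith [three_div_four_le_mul_sum_configProb_filter_score_nonpos hp hw hpos]

end Logit

section Probability

variable {Ω : Type*} [MeasurableSpace Ω] {μ : Measure Ω} [IsProbabilityMeasure μ]
  {η : ι → Ω → ℝ} {p : ι → ℝ}

lemma measure_votePattern_preimage_singleton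
    (hp : ∀ i, p i ∈ Set.Icc (0 : ℝ) 1) (hmeas : ∀ i, Measurable (η i))
    (hprob : ∀ i, μ {ω | η i ω = 1} = ENNReal.ofReal (p i)) (hind : iIndepFun η μ)
    (f : ι → Bool) : μ (votePattern η ⁻¹' {f}) = ENNReal.ofReal (configProb p f) := by
  have hpre : votePattern η ⁻¹' {f} = ⋂ i, (fun x => decide (x = 1)) ∘ η i ⁻¹' {f i} := by
    ext ω
    simp [votePattern, funext_iff]
  rw [hpre, (hind.comp _ fun _ => measurable_decide_eq_one).meas_iInter
      fun i => ⟨{f i}, measurableSet_singleton _, rfl⟩,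
    configProb, ENNReal.ofReal_prod_of_nonneg fun i _ => by
      obtain ⟨hp0, hp1⟩ := hp i
      split <;> linarith]
  refine prod_congr rfl fun i _ => ?_
  have hmeas1 : MeasurableSet {ω | η i ω = 1} := hmeas i (measurableSet_singleton 1)
  cases f i
  · have : (fun x => decide (x = 1)) ∘ η i ⁻¹' {false} = {ω | η i ω = 1}ᶜ := by ext; simp
    rw [this, measure_compl hmeas1 (measure_ne_top μ _), measure_univ, hprob i,
      ← ENNReal.ofReal_one, ← ENNReal.ofReal_sub _ (hp i).1]
    rfl
  · have : (fun x => decide (x = 1)) ∘ η i ⁻¹' {true} = {ω | η i ω = 1} := by ext; simp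
    rw [this, hprob i]
    rfl

lemma measure_votePattern_preimage [DecidableEq ι]
    (hp : ∀ i, p i ∈ Set.Icc (0 : ℝ) 1) (hmeas : ∀ i, Measurable (η i))
    (hprob : ∀ i, μ {ω | η i ω = 1} = ENNReal.ofReal (p i)) (hind : iIndepFun η μ)
    (S : Finset (ι → Bool)) :
    μ (votePattern η ⁻¹' S) = ENNReal.ofReal (∑ f ∈ S, configProb p f) := by
  rw [← sum_measure_preimage_singleton S fun f _ =>
      measurable_votePattern hmeas (measurableSet_singleton f),
    ENNReal.ofReal_sum_of_nonneg fun f _ => configProb_nonneg hp f]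
  exact sum_congr rfl fun f _ => measure_votePattern_preimage_singleton hp hmeas hprob hind f

end Probability

end CommitteeVoting

open CommitteeVoting

theorem optimal_rule_error_lower_bound_general
    {Ω : Type*} [MeasurableSpace Ω] (μ : Measure Ω) [IsProbabilityMeasure μ]
    (n : ℕ)
    (p : Fin n → ℝ) (hp : ∀ i, p i ∈ Set.Ioo (0 : ℝ) 1)
    (η : Fin n → Ω → ℝ)
    (hηmeas : ∀ i, Measurable (η i))
    (hηval : ∀ i ω, η i ω = 1 ∨ η i ω = -1)
    (hηprob : ∀ i, μ {ω | η i ω = 1} = ENNReal.ofReal (p i))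
    (hηind : iIndepFun η μ)
    (w : Fin n → ℝ) (hw : ∀ i, w i = Real.log (p i / (1 - p i)))
    (Φ : ℝ) (hΦ : Φ = ∑ i, (p i - 1/2) * w i) :
    ENNReal.ofReal (3 / (4 * (1 + Real.exp (2 * Φ + 4 * Real.sqrt Φ)))) ≤
      μ {ω | ∑ i, w i * η i ω ≤ 0} := by
  have hevent : {ω | ∑ i, w i * η i ω ≤ 0} =
      votePattern η ⁻¹' ↑(univ.filter fun f => score w f ≤ 0) := by
    ext ω
    rw [Set.mem_preimage, mem_coe, mem_filter]
    simp [score, voteSign_votePattern hηval]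
  rw [hevent, measure_votePattern_preimage (fun i => Set.Ioo_subset_Icc_self (hp i))
    hηmeas hηprob hηind]
  exact ENNReal.ofReal_le_ofReal (hΦ ▸ le_sum_configProb_filter_score_nonpos hp hw)

/-- Theorem 1(ii): lower bound on the error probability of the Nitzan–Paroush
optimal weighted majority rule. -/
theorem optimal_rule_error_lower_bound
    {Ω : Type*} [MeasurableSpace Ω] (μ : Measure Ω) [IsProbabilityMeasure μ]
    (n : ℕ) (hn : 1 ≤ n)
    (p : Fin n → ℝ) (hp : ∀ i, p i ∈ Set.Ioo (0 : ℝ) 1)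
    (η : Fin n → Ω → ℝ)
    (hηmeas : ∀ i, Measurable (η i))
    (hηval : ∀ i ω, η i ω = 1 ∨ η i ω = -1)
    (hηprob : ∀ i, μ {ω | η i ω = 1} = ENNReal.ofReal (p i))
    (hηind : iIndepFun η μ)
    (w : Fin n → ℝ) (hw : ∀ i, w i = Real.log (p i / (1 - p i)))
    (Φ : ℝ) (hΦ : Φ = ∑ i, (p i - 1/2) * w i) :
    ENNReal.ofReal (3 / (4 * (1 + Real.exp (2 * Φ + 4 * Real.sqrt Φ)))) ≤
      μ {ω | ∑ i, w i * η i ω ≤ 0} :=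
  optimal_rule_error_lower_bound_general μ n p hp η hηmeas hηval hηprob hηind w hw Φ hΦ
end

section
/- Antipodal decomposition of correctness and error probabilities (Lemma 2): in the committee model, assume Σ_{i=1}^n w_i η_i ≠ 0 for every sign vector η ∈ {−1,+1}^n. For η ∈ {−1,+1}^n let P(η) = Π_{i: η_i=1} p_i · Π_{i: η_i=−1} q_i. Then P(Σ_{i=1}^n w_i η_i > 0) = Σ_η max{P(η), P(−η)} and P(Σ_{i=1}^n w_i η_i ≤ 0) = Σ_η min{P(η), P(−η)}, where each sum ranges over a set of representatives containing exactly one element of each antipodal pair {η, −η} ⊂ {−1,+1}^n. -/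
/-!
The Nitzan–Paroush statistic of a sign vector `s` is the log-likelihood ratio
`log P(s) - log P(-s)`, so it is positive exactly when `s` is the more likely member of its
antipodal pair. Hence the event that the weighted vote is correct collects, from each pair,
the atom of larger probability, and its complement the atom of smaller probability.
-/

open MeasureTheory ProbabilityTheory

open Finset

section AntipodalPairs

variable {α M : Type*} [Fintype α] [AddCommMonoid M] {σ : α → α} {V : Finset α}

theorem sum_univ_eq_sum_add_of_involutive (hσ : Function.Involutive σ)
    (hV : ∀ s, s ∈ V ↔ σ s ∉ V) (f : α → M) :
    ∑ s, f s = ∑ s ∈ V, (f s + f (σ s)) := by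
  classical
  have hcompl : ∑ s ∈ Vᶜ, f s = ∑ s ∈ V, f (σ s) :=
    sum_nbij' σ σ (fun s hs => by_contra fun h => mem_compl.1 hs ((hV s).2 h))
      (fun s hs => mem_compl.2 ((hV s).1 hs)) (fun s _ => hσ s) (fun s _ => hσ s)
      (fun s _ => by rw [hσ])
  rw [← sum_add_sum_compl V, hcompl, sum_add_distrib]

variable [LinearOrder M]

theorem sum_filter_lt_comp_eq_sum_max (hσ : Function.Involutive σ)
    (hV : ∀ s, s ∈ V ↔ σ s ∉ V) (P : α → M) (hP : ∀ s, P s ≠ P (σ s)) :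
    ∑ s with P (σ s) < P s, P s = ∑ s ∈ V, max (P s) (P (σ s)) := by
  rw [sum_filter, sum_univ_eq_sum_add_of_involutive hσ hV]
  refine sum_congr rfl fun s _ => ?_
  rw [hσ s]
  rcases (hP s).lt_or_gt with h | h
  · simp [h, h.not_gt, max_eq_right h.le]
  · simp [h, h.not_gt, max_eq_left h.le]

theorem sum_filter_le_comp_eq_sum_min (hσ : Function.Involutive σ)
    (hV : ∀ s, s ∈ V ↔ σ s ∉ V) (P : α → M) (hP : ∀ s, P s ≠ P (σ s)) :
    ∑ s with P s ≤ P (σ s), P s = ∑ s ∈ V, min (P s) (P (σ s)) := by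
  rw [sum_filter, sum_univ_eq_sum_add_of_involutive hσ hV]
  refine sum_congr rfl fun s _ => ?_
  rw [hσ s]
  rcases (hP s).lt_or_gt with h | h
  · simp [h.le, h.not_ge]
  · simp [h.le, h.not_ge]

end AntipodalPairs

section SignVector

variable {ι Ω : Type*}

noncomputable def signVector (η : ι → Ω → ℝ) (ω : Ω) : ι → Bool := fun i => decide (η i ω = 1)

theorem decide_eq_one_eq_iff {x : ℝ} (hx : x = 1 ∨ x = -1) (b : Bool) :
    decide (x = 1) = b ↔ x = if b then 1 else -1 := by
  rcases hx with rfl | rfl <;> cases b <;> norm_num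

theorem signVector_preimage_singleton {η : ι → Ω → ℝ} (hηval : ∀ i ω, η i ω = 1 ∨ η i ω = -1)
    (s : ι → Bool) : signVector η ⁻¹' {s} = ⋂ i, η i ⁻¹' {if s i then 1 else -1} := by
  ext ω
  simp only [Set.mem_preimage, Set.mem_singleton_iff, Set.mem_iInter, funext_iff, signVector,
    decide_eq_one_eq_iff (hηval _ ω)]

theorem apply_eq_ite_signVector {η : ι → Ω → ℝ} (hηval : ∀ i ω, η i ω = 1 ∨ η i ω = -1)
    (i : ι) (ω : Ω) : η i ω = if signVector η ω i then 1 else -1 :=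
  (decide_eq_one_eq_iff (hηval i ω) _).1 rfl

variable [Fintype ι]

def signProb (p : ι → ℝ) (s : ι → Bool) : ℝ := ∏ i, if s i then p i else 1 - p i

theorem signProb_pos {p : ι → ℝ} (hp : ∀ i, p i ∈ Set.Ioo 0 1) (s : ι → Bool) :
    0 < signProb p s :=
  prod_pos fun i _ => by cases s i <;> simp [(hp i).1, (hp i).2]

theorem signProb_nonneg {p : ι → ℝ} (hp : ∀ i, p i ∈ Set.Icc 0 1) (s : ι → Bool) :
    0 ≤ signProb p s :=
  prod_nonneg fun i _ => by cases s i <;> simp [(hp i).1, (hp i).2]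

theorem log_signProb_sub_log_signProb_not {p : ι → ℝ} (hp : ∀ i, p i ∈ Set.Ioo 0 1)
    (s : ι → Bool) :
    Real.log (signProb p s) - Real.log (signProb p fun i => !s i) =
      ∑ i, Real.log (p i / (1 - p i)) * (if s i then 1 else -1) := by
  have hq : ∀ i, 1 - p i ≠ 0 := fun i => (sub_pos.2 (hp i).2).ne'
  have hne : ∀ (b : Bool) i, (if b then p i else 1 - p i) ≠ 0 := fun b i => by
    cases b <;> simp [(hp i).1.ne', hq i]
  rw [signProb, signProb, Real.log_prod fun i _ => hne _ i, Real.log_prod fun i _ => hne _ i,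
    ← sum_sub_distrib]
  refine sum_congr rfl fun i _ => ?_
  rw [Real.log_div (hp i).1.ne' (hq i)]
  cases s i <;> simp

variable [MeasurableSpace Ω] {μ : Measure Ω} [IsProbabilityMeasure μ]

theorem measure_eq_neg_one {X : Ω → ℝ} {q : ℝ} (hX : Measurable X)
    (hXval : ∀ ω, X ω = 1 ∨ X ω = -1) (hq : 0 ≤ q) (hprob : μ {ω | X ω = 1} = ENNReal.ofReal q) :
    μ {ω | X ω = -1} = ENNReal.ofReal (1 - q) := by
  have hcompl : {ω | X ω = -1} = {ω | X ω = 1}ᶜ := by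
    ext ω
    rcases hXval ω with h | h <;> simp [h] <;> norm_num
  have hmeas : MeasurableSet {ω | X ω = 1} := hX (measurableSet_singleton 1)
  rw [hcompl, prob_compl_eq_one_sub hmeas, hprob, ENNReal.ofReal_sub _ hq, ENNReal.ofReal_one]

variable {η : ι → Ω → ℝ} {p : ι → ℝ}

theorem measure_signVector_preimage_singleton (hηmeas : ∀ i, Measurable (η i))
    (hηval : ∀ i ω, η i ω = 1 ∨ η i ω = -1) (hp : ∀ i, p i ∈ Set.Icc 0 1)
    (hηprob : ∀ i, μ {ω | η i ω = 1} = ENNReal.ofReal (p i)) (hηind : iIndepFun η μ)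
    (s : ι → Bool) :
    μ (signVector η ⁻¹' {s}) = ENNReal.ofReal (signProb p s) := by
  rw [signVector_preimage_singleton hηval,
    hηind.meas_iInter fun i => ⟨_, measurableSet_singleton _, rfl⟩, signProb,
    ENNReal.ofReal_prod_of_nonneg fun i _ => by cases s i <;> simp [(hp i).1, (hp i).2]]
  refine prod_congr rfl fun i _ => ?_
  cases s i
  · exact measure_eq_neg_one (hηmeas i) (hηval i) (hp i).1 (hηprob i)
  · exact hηprob i

theorem measure_signVector_preimage (hηmeas : ∀ i, Measurable (η i))
    (hηval : ∀ i ω, η i ω = 1 ∨ η i ω = -1) (hp : ∀ i, p i ∈ Set.Icc 0 1)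
    (hηprob : ∀ i, μ {ω | η i ω = 1} = ENNReal.ofReal (p i)) (hηind : iIndepFun η μ)
    (S : Finset (ι → Bool)) :
    μ (signVector η ⁻¹' S) = ENNReal.ofReal (∑ s ∈ S, signProb p s) := by
  rw [← sum_measure_preimage_singleton S fun s _ => ?meas,
    ENNReal.ofReal_sum_of_nonneg fun s _ => signProb_nonneg hp s]
  · exact sum_congr rfl fun s _ =>
      measure_signVector_preimage_singleton hηmeas hηval hp hηprob hηind s
  · rw [signVector_preimage_singleton hηval]
    exact .iInter fun i => hηmeas i (measurableSet_singleton _)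

end SignVector

theorem antipodal_decomposition_general
    {Ω : Type*} [MeasurableSpace Ω] (μ : Measure Ω) [IsProbabilityMeasure μ]
    (n : ℕ)
    (p : Fin n → ℝ) (hp : ∀ i, p i ∈ Set.Ioo (0 : ℝ) 1)
    (η : Fin n → Ω → ℝ)
    (hηmeas : ∀ i, Measurable (η i))
    (hηval : ∀ i ω, η i ω = 1 ∨ η i ω = -1)
    (hηprob : ∀ i, μ {ω | η i ω = 1} = ENNReal.ofReal (p i))
    (hηind : iIndepFun η μ)
    (w : Fin n → ℝ) (hw : ∀ i, w i = Real.log (p i / (1 - p i)))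
    (hne : ∀ s : Fin n → Bool, ∑ i, w i * (if s i then (1 : ℝ) else -1) ≠ 0)
    (P : (Fin n → Bool) → ℝ)
    (hP : ∀ s, P s = ∏ i, if s i then p i else 1 - p i)
    (V : Finset (Fin n → Bool))
    (hV : ∀ s, s ∈ V ↔ (fun i => !s i) ∉ V) :
    μ {ω | 0 < ∑ i, w i * η i ω} =
        ENNReal.ofReal (∑ s ∈ V, max (P s) (P (fun i => !s i))) ∧
    μ {ω | ∑ i, w i * η i ω ≤ 0} =
        ENNReal.ofReal (∑ s ∈ V, min (P s) (P (fun i => !s i))) := by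
  obtain rfl : P = signProb p := funext hP
  set σ : (Fin n → Bool) → Fin n → Bool := fun s i => !s i
  have hσ : Function.Involutive σ := fun s => funext fun i => Bool.not_not (s i)
  have hpos := signProb_pos hp
  have hstat : ∀ s, ∑ i, w i * (if s i then 1 else -1) =
      Real.log (signProb p s) - Real.log (signProb p (σ s)) := fun s => by
    simp only [hw, σ, log_signProb_sub_log_signProb_not hp]
  have hsum : ∀ ω, ∑ i, w i * η i ω = ∑ i, w i * (if signVector η ω i then 1 else -1) :=
    fun ω => sum_congr rfl fun i _ => by rw [apply_eq_ite_signVector hηval i ω]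
  have hties : ∀ s, signProb p s ≠ signProb p (σ s) := fun s h =>
    hne s (by rw [hstat, h, sub_self])
  have hp_Icc : ∀ i, p i ∈ Set.Icc 0 1 := fun i => Set.Ioo_subset_Icc_self (hp i)
  have hμ := measure_signVector_preimage hηmeas hηval hp_Icc hηprob hηind
  constructor
  · have hevent : {ω | 0 < ∑ i, w i * η i ω} =
        signVector η ⁻¹' ↑(filter (fun s => signProb p (σ s) < signProb p s) univ) := by
      ext ω
      simp only [Set.mem_ofPred_eq, Set.mem_preimage, coe_filter, mem_univ, true_and, hsum, hstat,
        sub_pos, Real.log_lt_log_iff (hpos _) (hpos _)]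
    rw [hevent, hμ, sum_filter_lt_comp_eq_sum_max hσ hV _ hties]
  · have hevent : {ω | ∑ i, w i * η i ω ≤ 0} =
        signVector η ⁻¹' ↑(filter (fun s => signProb p s ≤ signProb p (σ s)) univ) := by
      ext ω
      simp only [Set.mem_ofPred_eq, Set.mem_preimage, coe_filter, mem_univ, true_and, hsum, hstat,
        sub_nonpos, Real.log_le_log_iff (hpos _) (hpos _)]
    rw [hevent, hμ, sum_filter_le_comp_eq_sum_min hσ hV _ hties]

/-- Lemma 2: antipodal decomposition of the correctness and error probabilities of the
Nitzan–Paroush optimal weighted majority rule.  Sign vectors are encoded as elements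
`s : Fin n → Bool`, with `s i = true` meaning `η_i = 1` and `s i = false` meaning `η_i = -1`;
the antipode of `s` is `fun i => !s i`.  `V` is a set of representatives containing exactly
one member of each antipodal pair. -/
theorem antipodal_decomposition
    {Ω : Type*} [MeasurableSpace Ω] (μ : Measure Ω) [IsProbabilityMeasure μ]
    (n : ℕ) (hn : 1 ≤ n)
    (p : Fin n → ℝ) (hp : ∀ i, p i ∈ Set.Ioo (0 : ℝ) 1)
    (η : Fin n → Ω → ℝ)
    (hηmeas : ∀ i, Measurable (η i))
    (hηval : ∀ i ω, η i ω = 1 ∨ η i ω = -1)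
    (hηprob : ∀ i, μ {ω | η i ω = 1} = ENNReal.ofReal (p i))
    (hηind : iIndepFun η μ)
    (w : Fin n → ℝ) (hw : ∀ i, w i = Real.log (p i / (1 - p i)))
    (hne : ∀ s : Fin n → Bool, ∑ i, w i * (if s i then (1 : ℝ) else -1) ≠ 0)
    (P : (Fin n → Bool) → ℝ)
    (hP : ∀ s, P s = ∏ i, if s i then p i else 1 - p i)
    (V : Finset (Fin n → Bool))
    (hV : ∀ s, s ∈ V ↔ (fun i => !s i) ∉ V) :
    μ {ω | 0 < ∑ i, w i * η i ω} =
        ENNReal.ofReal (∑ s ∈ V, max (P s) (P (fun i => !s i))) ∧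
    μ {ω | ∑ i, w i * η i ω ≤ 0} =
        ENNReal.ofReal (∑ s ∈ V, min (P s) (P (fun i => !s i))) :=
  antipodal_decomposition_general μ n p hp η hηmeas hηval hηprob hηind w hw hne P hP V hV
end

section
/- Lemma 4: Define F : (0,1) → ℝ by F(x) = x(1−x)·log(x/(1−x))/(2x−1) for x ≠ 1/2 and F(1/2) = 1/2 (the value by continuity). Then sup_{0<x<1} F(x) = 1/2; in particular, for every x ∈ (0,1) with x ≠ 1/2, x(1−x)·log(x/(1−x))/(2x−1) ≤ 1/2. -/
/-! With `u = log (x / (1 - x))` one has `2x - 1 = 2x(1 - x) sinh u`, so `F(x) = u / (2 sinh u)`,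
which is below `1/2` because `|u| < |sinh u|` for `u ≠ 0`. -/

namespace Real

lemma self_div_sinh_lt_one {u : ℝ} (hu : u ≠ 0) : u / sinh u < 1 := by
  rcases hu.lt_or_gt with hneg | hpos
  · have hlt : -u < sinh (-u) := self_lt_sinh_iff.2 (neg_pos.2 hneg)
    rw [sinh_neg] at hlt
    exact (div_lt_one_of_neg (sinh_neg_iff.2 hneg)).2 (by linarith)
  · exact (div_lt_one (sinh_pos_iff.2 hpos)).2 (self_lt_sinh_iff.2 hpos)

lemma mul_one_sub_mul_sinh_log_div {x : ℝ} (hx : x ∈ Set.Ioo (0 : ℝ) 1) :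
    x * (1 - x) * sinh (log (x / (1 - x))) = (2 * x - 1) / 2 := by
  have hx0 : x ≠ 0 := hx.1.ne'
  have h1x : 1 - x ≠ 0 := by linarith [hx.2]
  rw [sinh_log (div_pos hx.1 (by linarith [hx.2]))]
  field_simp
  ring

lemma mul_one_sub_mul_log_div_eq {x : ℝ} (hx : x ∈ Set.Ioo (0 : ℝ) 1) :
    x * (1 - x) * log (x / (1 - x)) / (2 * x - 1)
      = log (x / (1 - x)) / (2 * sinh (log (x / (1 - x)))) := by
  have hpos : 0 < x * (1 - x) := mul_pos hx.1 (by linarith [hx.2])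
  rw [show 2 * x - 1 = x * (1 - x) * (2 * sinh (log (x / (1 - x)))) by
    linarith [mul_one_sub_mul_sinh_log_div hx], mul_div_mul_left _ _ hpos.ne']

lemma mul_one_sub_mul_log_div_le_half {x : ℝ} (hx : x ∈ Set.Ioo (0 : ℝ) 1) (hne : x ≠ 1 / 2) :
    x * (1 - x) * log (x / (1 - x)) / (2 * x - 1) ≤ 1 / 2 := by
  have hu : log (x / (1 - x)) ≠ 0 := by
    intro h0
    have := mul_one_sub_mul_sinh_log_div hx
    rw [h0, sinh_zero, mul_zero] at this
    exact hne (by linarith)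
  rw [mul_one_sub_mul_log_div_eq hx, mul_comm 2, ← div_div]
  linarith [self_div_sinh_lt_one hu]

end Real

/-- Lemma 4: the function `F(x) = x(1−x)·log(x/(1−x))/(2x−1)` (with `F(1/2) = 1/2` by
continuity) has supremum `1/2` on `(0,1)`; in particular `F(x) ≤ 1/2` for all
`x ∈ (0,1)` with `x ≠ 1/2`. -/
theorem sup_F_eq_half :
    sSup ((fun x : ℝ => if x = 1/2 then 1/2
        else x * (1 - x) * Real.log (x / (1 - x)) / (2 * x - 1)) '' Set.Ioo (0 : ℝ) 1)
      = 1/2 ∧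
    ∀ x : ℝ, x ∈ Set.Ioo (0 : ℝ) 1 → x ≠ 1/2 →
      x * (1 - x) * Real.log (x / (1 - x)) / (2 * x - 1) ≤ 1/2 := by
  refine ⟨IsGreatest.csSup_eq ⟨⟨1 / 2, by norm_num, by simp⟩, ?_⟩,
    fun x hx hne => Real.mul_one_sub_mul_log_div_le_half hx hne⟩
  rintro _ ⟨x, hx, rfl⟩
  dsimp only
  split_ifs with hne
  · exact le_rfl
  · exact Real.mul_one_sub_mul_log_div_le_half hx hne
end

section
/- Weight–variance inequality (consequence of Lemma 4): for every p ∈ (0,1), with q = 1 − p and w = log(p/q), one has p·q·w² ≤ (1/2)·(p − q)·w. -/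
/-! For `w = log (p / q)` with `p + q = 1` one has `sinh w = (p - q) / (2 p q)`, so the claim
`p q w² ≤ (p - q) w / 2` is `p q w² ≤ p q · w sinh w`, i.e. `w² ≤ w sinh w`, which holds because
`sinh` moves every real number away from `0`. -/

open Real

lemma sq_le_mul_sinh (x : ℝ) : x ^ 2 ≤ x * sinh x := by
  rcases le_total 0 x with hx | hx
  · nlinarith [self_le_sinh_iff.2 hx]
  · nlinarith [sinh_le_self_iff.2 hx]

lemma two_mul_mul_sinh_log_div {p q : ℝ} (hp : 0 < p) (hq : 0 < q) (hpq : p + q = 1) :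
    2 * p * q * sinh (log (p / q)) = p - q := by
  rw [sinh_log (div_pos hp hq)]
  field_simp
  linear_combination (p - q) * hpq

/-- Weight–variance inequality: for `p ∈ (0,1)`, `q = 1 − p` and `w = log(p/q)`,
one has `p·q·w² ≤ (1/2)·(p − q)·w`. -/
theorem weight_variance_inequality
    (p : ℝ) (hp : p ∈ Set.Ioo (0 : ℝ) 1) (q w : ℝ)
    (hq : q = 1 - p) (hw : w = Real.log (p / q)) :
    p * q * w ^ 2 ≤ (1/2) * (p - q) * w := by
  obtain ⟨hp0, hp1⟩ := hp
  have hq0 : 0 < q := by linarith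
  have hsinh : 2 * p * q * sinh w = p - q := hw ▸ two_mul_mul_sinh_log_div hp0 hq0 (by linarith)
  calc p * q * w ^ 2 ≤ p * q * (w * sinh w) := by gcongr; exact sq_le_mul_sinh w
    _ = 1 / 2 * (p - q) * w := by rw [← hsinh]; ring
end

section
/- Concentration of the weighted vote: in the committee model, if Φ > 0 then P(2Φ − 4√Φ ≤ Σ_{i=1}^n w_i η_i ≤ 2Φ + 4√Φ) ≥ 3/4. -/
/-!
The weighted vote `S = ∑ wᵢ ηᵢ` has mean `∑ wᵢ (2pᵢ - 1) = 2Φ` and, by independence,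
variance `∑ 4 pᵢ qᵢ wᵢ²`. Since `sinh wᵢ = (pᵢ - qᵢ) / (2 pᵢ qᵢ)` and `w² ≤ w sinh w`, each
summand is at most `4 (pᵢ - 1/2) wᵢ`, so `Var S ≤ 4Φ`, and Chebyshev's inequality at distance
`4√Φ` leaves at most `4Φ / 16Φ = 1/4` outside the interval.
-/

open MeasureTheory ProbabilityTheory

namespace Real

theorem sq_le_mul_sinh (y : ℝ) : y ^ 2 ≤ y * sinh y := by
  rw [sq]
  rcases le_total 0 y with hy | hy
  · exact mul_le_mul_of_nonneg_left (self_le_sinh_iff.mpr hy) hy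
  · exact mul_le_mul_of_nonpos_left (sinh_le_self_iff.mpr hy) hy

theorem sinh_log_div_one_sub {p : ℝ} (hp₀ : 0 < p) (hp₁ : p < 1) :
    sinh (log (p / (1 - p))) = (p - 1 / 2) / (p * (1 - p)) := by
  have hq₀ : 0 < 1 - p := sub_pos.mpr hp₁
  rw [sinh_log (div_pos hp₀ hq₀)]
  field_simp
  ring

theorem mul_one_sub_mul_log_div_one_sub_sq_le {p : ℝ} (hp₀ : 0 < p) (hp₁ : p < 1) :
    p * (1 - p) * log (p / (1 - p)) ^ 2 ≤ (p - 1 / 2) * log (p / (1 - p)) := by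
  have hq₀ : 0 < 1 - p := sub_pos.mpr hp₁
  have hpq : 0 < p * (1 - p) := mul_pos hp₀ hq₀
  calc p * (1 - p) * log (p / (1 - p)) ^ 2
      ≤ p * (1 - p) * (log (p / (1 - p)) * sinh (log (p / (1 - p)))) :=
        mul_le_mul_of_nonneg_left (sq_le_mul_sinh _) hpq.le
    _ = (p - 1 / 2) * log (p / (1 - p)) := by
        rw [sinh_log_div_one_sub hp₀ hp₁]
        field_simp

end Real

namespace ProbabilityTheory

variable {Ω : Type*} [MeasurableSpace Ω] {μ : Measure Ω} {X : Ω → ℝ}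

theorem memLp_of_eq_one_or_eq_neg_one [IsFiniteMeasure μ] (hXm : Measurable X)
    (hX : ∀ ω, X ω = 1 ∨ X ω = -1) (q : ENNReal) : MemLp X q μ :=
  memLp_of_bounded (a := -1) (b := 1)
    (ae_of_all _ fun ω => by rcases hX ω with h | h <;> simp [h]) hXm.aestronglyMeasurable q

theorem integral_eq_two_mul_measureReal_sub_one [IsProbabilityMeasure μ] (hXm : Measurable X)
    (hX : ∀ ω, X ω = 1 ∨ X ω = -1) : μ[X] = 2 * μ.real {ω | X ω = 1} - 1 := by
  have hA : MeasurableSet {ω | X ω = 1} := hXm (measurableSet_singleton 1)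
  have hX_eq : ∀ ω, X ω = {ω | X ω = 1}.indicator (fun _ => (2 : ℝ)) ω - 1 := fun ω => by
    rcases hX ω with h | h
    · rw [Set.indicator_of_mem (by exact h), h]; norm_num
    · rw [Set.indicator_of_notMem (by norm_num [h]), h]; norm_num
  rw [integral_congr_ae (ae_of_all _ hX_eq),
    integral_sub ((integrable_const 2).indicator hA) (integrable_const 1),
    integral_indicator_const 2 hA, integral_const]
  simp [mul_comm]

theorem variance_eq_one_sub_sq_integral [IsProbabilityMeasure μ] (hXm : Measurable X)
    (hX : ∀ ω, X ω = 1 ∨ X ω = -1) : variance X μ = 1 - μ[X] ^ 2 := by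
  have hX_sq : X ^ 2 = fun _ => (1 : ℝ) := by
    funext ω
    rcases hX ω with h | h <;> simp [h]
  rw [variance_eq_sub (memLp_of_eq_one_or_eq_neg_one hXm hX 2), hX_sq]
  simp

theorem ofReal_one_sub_variance_div_sq_le [IsProbabilityMeasure μ] (hX : MemLp X 2 μ) {c : ℝ}
    (hc : 0 < c) : ENNReal.ofReal (1 - variance X μ / c ^ 2) ≤ μ {ω | |X ω - μ[X]| < c} := by
  have hcover : (1 : ENNReal) ≤ μ {ω | c ≤ |X ω - μ[X]|} + μ {ω | |X ω - μ[X]| < c} := by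
    rw [← measure_univ (μ := μ)]
    refine le_trans (measure_mono fun ω _ => ?_) (measure_union_le _ _)
    exact le_or_gt c |X ω - μ[X]|
  rw [ENNReal.ofReal_sub _ (div_nonneg (variance_nonneg X μ) (sq_nonneg c)), ENNReal.ofReal_one,
    tsub_le_iff_left]
  exact hcover.trans (add_le_add_left (meas_ge_le_variance_div_sq hX hc) _)

theorem variance_sum_const_mul {ι : Type*} [Fintype ι] {η : ι → Ω → ℝ}
    (hη : ∀ i, MemLp (η i) 2 μ) (hind : iIndepFun η μ) (w : ι → ℝ) :
    variance (fun ω => ∑ i, w i * η i ω) μ = ∑ i, w i ^ 2 * variance (η i) μ := by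
  have hsum : (fun ω => ∑ i, w i * η i ω) = ∑ i, fun ω => w i * η i ω := by
    funext ω
    simp [Finset.sum_apply]
  rw [hsum, IndepFun.variance_sum (fun i _ => (hη i).const_mul (w i))
    fun i _ j _ hij => (hind.indepFun hij).comp (measurable_const_mul (w i))
      (measurable_const_mul (w j))]
  exact Finset.sum_congr rfl fun i _ => variance_const_mul (w i) (η i) μ

end ProbabilityTheory

theorem weighted_vote_concentration_general
    {Ω : Type*} [MeasurableSpace Ω] (μ : Measure Ω) [IsProbabilityMeasure μ]
    (n : ℕ)
    (p : Fin n → ℝ) (hp : ∀ i, p i ∈ Set.Ioo (0 : ℝ) 1)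
    (η : Fin n → Ω → ℝ)
    (hηmeas : ∀ i, Measurable (η i))
    (hηval : ∀ i ω, η i ω = 1 ∨ η i ω = -1)
    (hηprob : ∀ i, μ {ω | η i ω = 1} = ENNReal.ofReal (p i))
    (hηind : iIndepFun η μ)
    (w : Fin n → ℝ) (hw : ∀ i, w i = Real.log (p i / (1 - p i)))
    (Φ : ℝ) (hΦ : Φ = ∑ i, (p i - 1/2) * w i) (hΦpos : 0 < Φ) :
    ENNReal.ofReal (3/4) ≤
      μ {ω | 2 * Φ - 4 * Real.sqrt Φ ≤ ∑ i, w i * η i ω ∧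
             ∑ i, w i * η i ω ≤ 2 * Φ + 4 * Real.sqrt Φ} := by
  set S : Ω → ℝ := fun ω => ∑ i, w i * η i ω
  have hmem i : MemLp (η i) 2 μ := memLp_of_eq_one_or_eq_neg_one (hηmeas i) (hηval i) 2
  have hmean i : μ[η i] = 2 * p i - 1 := by
    rw [integral_eq_two_mul_measureReal_sub_one (hηmeas i) (hηval i), measureReal_def, hηprob i,
      ENNReal.toReal_ofReal (hp i).1.le]
  have hS_mean : μ[S] = 2 * Φ := by
    simp only [S, integral_finsetSum _ fun i _ => ((hmem i).integrable one_le_two).const_mul (w i),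
      integral_const_mul, hmean, hΦ, Finset.mul_sum]
    exact Finset.sum_congr rfl fun i _ => by ring
  have hS_var : variance S μ ≤ 4 * Φ := by
    rw [variance_sum_const_mul hmem hηind w, hΦ, Finset.mul_sum]
    refine Finset.sum_le_sum fun i _ => ?_
    have hlog := Real.mul_one_sub_mul_log_div_one_sub_sq_le (hp i).1 (hp i).2
    rw [← hw i] at hlog
    rw [variance_eq_one_sub_sq_integral (hηmeas i) (hηval i), hmean i]
    linear_combination 4 * hlog
  have hS_mem : MemLp S 2 μ := by
    simpa [S, Finset.sum_fn] using memLp_finsetSum' Finset.univ fun i _ => (hmem i).const_mul (w i)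
  have hc : (4 * Real.sqrt Φ) ^ 2 = 16 * Φ := by
    rw [mul_pow, Real.sq_sqrt hΦpos.le]; norm_num
  calc ENNReal.ofReal (3 / 4)
      ≤ ENNReal.ofReal (1 - variance S μ / (4 * Real.sqrt Φ) ^ 2) := by
        refine ENNReal.ofReal_le_ofReal ?_
        rw [hc, le_sub_comm, div_le_iff₀ (by positivity)]
        linarith
    _ ≤ μ {ω | |S ω - μ[S]| < 4 * Real.sqrt Φ} :=
        ofReal_one_sub_variance_div_sq_le hS_mem (by positivity)
    _ ≤ _ := measure_mono fun ω hω => by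
        rw [Set.mem_ofPred_eq, hS_mean, abs_sub_lt_iff] at hω
        constructor <;> linarith

/-- Concentration of the weighted vote: if `Φ > 0` then
`P(2Φ − 4√Φ ≤ ∑ w i * η i ≤ 2Φ + 4√Φ) ≥ 3/4`. -/
theorem weighted_vote_concentration
    {Ω : Type*} [MeasurableSpace Ω] (μ : Measure Ω) [IsProbabilityMeasure μ]
    (n : ℕ) (hn : 1 ≤ n)
    (p : Fin n → ℝ) (hp : ∀ i, p i ∈ Set.Ioo (0 : ℝ) 1)
    (η : Fin n → Ω → ℝ)
    (hηmeas : ∀ i, Measurable (η i))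
    (hηval : ∀ i ω, η i ω = 1 ∨ η i ω = -1)
    (hηprob : ∀ i, μ {ω | η i ω = 1} = ENNReal.ofReal (p i))
    (hηind : iIndepFun η μ)
    (w : Fin n → ℝ) (hw : ∀ i, w i = Real.log (p i / (1 - p i)))
    (Φ : ℝ) (hΦ : Φ = ∑ i, (p i - 1/2) * w i) (hΦpos : 0 < Φ) :
    ENNReal.ofReal (3/4) ≤
      μ {ω | 2 * Φ - 4 * Real.sqrt Φ ≤ ∑ i, w i * η i ω ∧
             ∑ i, w i * η i ω ≤ 2 * Φ + 4 * Real.sqrt Φ} :=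
  weighted_vote_concentration_general μ n p hp η hηmeas hηval hηprob hηind w hw Φ hΦ hΦpos
end

section
/- Kearns–Saul inequality: for every p ∈ (0,1) with p ≠ 1/2 and every t ∈ ℝ, (1−p)·e^{−tp} + p·e^{t(1−p)} ≤ exp( ((1 − 2p) / (4·log((1−p)/p))) · t² ). -/
/-!
Put `a = artanh (1 - 2p) = log ((1 - p) / p) / 2`, so that `tanh a = 1 - 2p`. The left-hand side
is then `exp (t tanh a / 2) * cosh (t / 2 - a) / cosh a`, and the claim reduces to
`log (cosh x) ≤ log (cosh a) + tanh a / (2a) * (x² - a²)`, the tangent-line inequality at `a²` for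
the concave function `s ↦ log (cosh √s)`. It holds because
`x ↦ tanh a / (2a) * x² - log (cosh x)` has derivative `x * (tanh a / a - tanh x / x)`, which,
as `tanh x / x` is decreasing on `(0, ∞)`, changes sign only at `x = ±a`.
-/

open Real Set

namespace Real

theorem hasDerivAt_tanh (x : ℝ) : HasDerivAt tanh (1 / cosh x ^ 2) x := by
  rw [show tanh = fun y => sinh y / cosh y from funext tanh_eq_sinh_div_cosh]
  refine ((hasDerivAt_sinh x).div (hasDerivAt_cosh x) (cosh_pos x).ne').congr_deriv ?_
  rw [← cosh_sq_sub_sinh_sq x]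
  ring

theorem self_le_sinh_mul_cosh {t : ℝ} (ht : 0 ≤ t) : t ≤ sinh t * cosh t := by
  nlinarith [self_le_sinh_iff.2 ht, one_le_cosh t, sinh_nonneg_iff.2 ht]

theorem tanh_div_self_antitoneOn : AntitoneOn (fun t => tanh t / t) (Ioi 0) := by
  have hderiv (t : ℝ) (ht : t ≠ 0) : HasDerivAt (fun t => tanh t / t)
      ((1 / cosh t ^ 2 * t - tanh t * 1) / t ^ 2) t :=
    (hasDerivAt_tanh t).div (hasDerivAt_id t) ht
  refine antitoneOn_of_hasDerivWithinAt_nonpos (convex_Ioi 0)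
    (fun t ht => (hderiv t (ne_of_gt ht)).continuousAt.continuousWithinAt)
    (fun t ht => (hderiv t (ne_of_gt (interior_subset ht))).hasDerivWithinAt) fun t ht => ?_
  rw [interior_Ioi] at ht
  have hc := cosh_pos t
  refine div_nonpos_of_nonpos_of_nonneg ?_ (sq_nonneg t)
  rw [tanh_eq_sinh_div_cosh, sub_nonpos, mul_one, one_div_mul_eq_div,
    div_le_div_iff₀ (by positivity) hc]
  nlinarith [self_le_sinh_mul_cosh (le_of_lt ht)]

theorem log_cosh_le_of_pos {a : ℝ} (ha : 0 < a) (x : ℝ) :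
    log (cosh x) ≤ log (cosh a) + tanh a / (2 * a) * (x ^ 2 - a ^ 2) := by
  set c := tanh a / a
  let G : ℝ → ℝ := fun t => c / 2 * t ^ 2 - log (cosh t)
  have hG_deriv (t : ℝ) : HasDerivAt G (c * t - tanh t) t := by
    have := ((hasDerivAt_pow 2 t).const_mul (c / 2)).sub ((hasDerivAt_cosh t).log (cosh_pos t).ne')
    refine this.congr_deriv ?_
    rw [tanh_eq_sinh_div_cosh]
    ring
  have hG_cont : Continuous G := continuous_iff_continuousAt.2 fun t => (hG_deriv t).continuousAt
  have hG_deriv_eq (t : ℝ) (ht : 0 < t) : c * t - tanh t = t * (c - tanh t / t) := by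
    field_simp
  have hG_anti : AntitoneOn G (Icc 0 a) := by
    refine antitoneOn_of_hasDerivWithinAt_nonpos (convex_Icc 0 a)
      hG_cont.continuousOn (fun t _ => (hG_deriv t).hasDerivWithinAt) fun t ht => ?_
    rw [interior_Icc] at ht
    rw [hG_deriv_eq t ht.1]
    exact mul_nonpos_of_nonneg_of_nonpos ht.1.le
      (sub_nonpos.2 (tanh_div_self_antitoneOn ht.1 ha ht.2.le))
  have hG_mono : MonotoneOn G (Ici a) := by
    refine monotoneOn_of_hasDerivWithinAt_nonneg (convex_Ici a)
      hG_cont.continuousOn (fun t _ => (hG_deriv t).hasDerivWithinAt) fun t ht => ?_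
    rw [interior_Ici] at ht
    have ht0 : 0 < t := ha.trans ht
    rw [hG_deriv_eq t ht0]
    exact mul_nonneg ht0.le (sub_nonneg.2 (tanh_div_self_antitoneOn ha ht0 ht.le))
  have hG_min : G a ≤ G |x| := by
    rcases le_total |x| a with h | h
    · exact hG_anti ⟨abs_nonneg x, h⟩ ⟨ha.le, le_rfl⟩ h
    · exact hG_mono self_mem_Ici h h
  simp only [G, sq_abs, cosh_abs] at hG_min
  have hcoef : tanh a / (2 * a) = c / 2 := by ring
  rw [hcoef]
  linarith

theorem log_cosh_le {a : ℝ} (ha : a ≠ 0) (x : ℝ) :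
    log (cosh x) ≤ log (cosh a) + tanh a / (2 * a) * (x ^ 2 - a ^ 2) := by
  rcases ha.lt_or_gt with ha | ha
  · simpa [tanh_neg, neg_div_neg_eq] using log_cosh_le_of_pos (neg_pos.2 ha) x
  · exact log_cosh_le_of_pos ha x

theorem cosh_le_cosh_mul_exp {a : ℝ} (ha : a ≠ 0) (x : ℝ) :
    cosh x ≤ cosh a * exp (tanh a / (2 * a) * (x ^ 2 - a ^ 2)) := by
  rw [← exp_log (cosh_pos x), ← exp_log (cosh_pos a), ← exp_add]
  exact exp_le_exp.2 (log_cosh_le ha x)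

theorem artanh_one_sub_two_mul {p : ℝ} (hp : p ∈ Ioo 0 1) :
    artanh (1 - 2 * p) = log ((1 - p) / p) / 2 := by
  obtain ⟨hp0, hp1⟩ := hp
  have h : (1 + (1 - 2 * p)) / (1 - (1 - 2 * p)) = (1 - p) / p := by
    field_simp
    ring
  rw [artanh_eq_half_log ⟨by linarith, by linarith⟩, h]
  ring

end Real

noncomputable def centeredBernoulliMgf (p t : ℝ) : ℝ :=
  (1 - p) * exp (-t * p) + p * exp (t * (1 - p))

theorem centeredBernoulliMgf_eq_of_tanh_eq {a p : ℝ} (h : tanh a = 1 - 2 * p) (t : ℝ) :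
    centeredBernoulliMgf p t = exp (t * tanh a / 2) * (cosh (t / 2 - a) / cosh a) := by
  have e₁ : exp (-t * p) = exp (t * tanh a / 2) * exp (-(t / 2)) := by
    rw [← exp_add, h]; ring_nf
  have e₂ : exp (t * (1 - p)) = exp (t * tanh a / 2) * exp (t / 2) := by
    rw [← exp_add, h]; ring_nf
  have hcosh : cosh (t / 2 - a) / cosh a = cosh (t / 2) - tanh a * sinh (t / 2) := by
    rw [cosh_sub, tanh_eq_sinh_div_cosh]
    field_simp [(cosh_pos a).ne']
  rw [centeredBernoulliMgf, e₁, e₂, hcosh, h, ← cosh_sub_sinh (t / 2), ← cosh_add_sinh (t / 2)]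
  ring

theorem centeredBernoulliMgf_le_of_tanh_eq {a p : ℝ} (h : tanh a = 1 - 2 * p) (ha : a ≠ 0)
    (t : ℝ) : centeredBernoulliMgf p t ≤ exp (tanh a / (8 * a) * t ^ 2) := by
  have hcosh := cosh_le_cosh_mul_exp ha (t / 2 - a)
  calc centeredBernoulliMgf p t = exp (t * tanh a / 2) * (cosh (t / 2 - a) / cosh a) :=
        centeredBernoulliMgf_eq_of_tanh_eq h t
    _ ≤ exp (t * tanh a / 2) * exp (tanh a / (2 * a) * ((t / 2 - a) ^ 2 - a ^ 2)) := by
        gcongr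
        rwa [div_le_iff₀' (cosh_pos a)]
    _ = exp (tanh a / (8 * a) * t ^ 2) := by
        rw [← exp_add]
        congr 1
        field_simp
        ring

/-- Kearns–Saul inequality: for `p ∈ (0,1)`, `p ≠ 1/2` and all `t ∈ ℝ`,
`(1−p)e^{−tp} + pe^{t(1−p)} ≤ exp(((1 − 2p)/(4 log((1−p)/p)))·t²)`. -/
theorem kearns_saul_inequality
    (p : ℝ) (hp : p ∈ Set.Ioo (0 : ℝ) 1) (hp' : p ≠ 1/2) (t : ℝ) :
    (1 - p) * Real.exp (-t * p) + p * Real.exp (t * (1 - p)) ≤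
      Real.exp ((1 - 2 * p) / (4 * Real.log ((1 - p) / p)) * t ^ 2) := by
  have htanh : tanh (artanh (1 - 2 * p)) = 1 - 2 * p :=
    tanh_artanh ⟨by linarith [hp.2], by linarith [hp.1]⟩
  have hne : artanh (1 - 2 * p) ≠ 0 := fun h => hp' (by linarith [h ▸ htanh, tanh_zero])
  have hcoef : 8 * artanh (1 - 2 * p) = 4 * log ((1 - p) / p) := by
    rw [artanh_one_sub_two_mul hp]
    ring
  simpa only [centeredBernoulliMgf, htanh, hcoef] using
    centeredBernoulliMgf_le_of_tanh_eq htanh hne t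
end

section
/- Low-confidence error bound: in the committee model with estimation, define the low-confidence weights ŵ_i = p̂_i − 1/2 and let the low-confidence rule err exactly on the event {Σ_{i=1}^n ŵ_i (ξ_i − 1/2) ≤ 0}, where ξ_i = (η_i + 1)/2 ∈ {0,1} is the correctness indicator of expert i. Then the probability of error satisfies P(Σ_{i=1}^n ŵ_i(ξ_i − 1/2) ≤ 0) ≤ exp( −(8/n)·(Σ_{i=1}^n (p_i − 1/2)²)² ). -/
open MeasureTheory ProbabilityTheory

/-!
Write `X i = (p̂ i - 1/2) (ξ i - 1/2)`. The empirical competence `p̂ i` and the vote `ξ i` are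
independent and both have mean `p i`, so `E[X i] = (p i - 1/2)²` and the expected margin is
`S = ∑ (p i - 1/2)²`. The `X i` are independent and take values in `[-1/4, 1/4]`, so Hoeffding's
inequality bounds `P(∑ X i ≤ 0) = P(∑ X i ≤ E[∑ X i] - S)` by `exp(-2 S² / (n (1/2)²))`.
-/

open scoped unitInterval

lemma mul_mem_Icc_of_le_of_eq_one_or_neg_one {k m : ℕ} (hk : k ≤ m) {x : ℝ}
    (hx : x = 1 ∨ x = -1) :
    ((k : ℝ) / m - 1 / 2) * ((x + 1) / 2 - 1 / 2) ∈ Set.Icc (-1 / 4 : ℝ) (1 / 4) := by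
  have hw : |(k : ℝ) / m - 1 / 2| ≤ 1 / 2 := by
    have : (k : ℝ) / m ≤ 1 := div_le_one_of_le₀ (by exact_mod_cast hk) (Nat.cast_nonneg m)
    have : 0 ≤ (k : ℝ) / m := by positivity
    rw [abs_le]; constructor <;> linarith
  have hv : |(x + 1) / 2 - 1 / 2| = 1 / 2 := by rcases hx with rfl | rfl <;> norm_num
  rw [Set.mem_Icc, show (-1 / 4 : ℝ) = -(1 / 4) by norm_num, ← abs_le, abs_mul, hv]
  linarith

namespace ProbabilityTheory

variable {Ω : Type*} [MeasurableSpace Ω] {μ : Measure Ω}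

lemma binomial_Iic_eq_one (m : ℕ) (p : I) : binomial m p (Set.Iic m) = 1 := by
  rw [← prob_compl_eq_zero_iff measurableSet_Iic]
  simpa [ae_iff, Set.compl_def] using ae_le_of_hasLaw_binomial (HasLaw.id (μ := binomial m p))

lemma hasLaw_binomial_of_measure_eq [IsProbabilityMeasure μ] {k : Ω → ℕ} (hk : Measurable k)
    {m : ℕ} {p : I}
    (h : ∀ j ≤ m, μ {ω | k ω = j} = ENNReal.ofReal (m.choose j * p ^ j * (1 - p) ^ (m - j))) :
    HasLaw k (binomial m p) μ where
  map_eq := by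
    have := Measure.isProbabilityMeasure_map (μ := μ) hk.aemeasurable
    have hmap : ∀ j ≤ m, μ.map k {j} = binomial m p {j} := fun j hj => by
      rw [Measure.map_apply hk (measurableSet_singleton j), binomial_singleton]
      exact h j hj
    have hIic : μ.map k (Set.Iic m) = 1 := by
      rw [← binomial_Iic_eq_one m p, ← Finset.coe_Iic, ← sum_measure_singleton,
        ← sum_measure_singleton]
      exact Finset.sum_congr rfl fun j hj => hmap j (Finset.mem_Iic.mp hj)
    -- The masses on `{0, …, m}` already add up to `1`, so none is left for `j > m`.
    refine Measure.ext_of_singleton fun j => ?_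
    rcases le_or_gt j m with hj | hj
    · exact hmap j hj
    · have hout : μ.map k (Set.Iic m)ᶜ = 0 :=
        (prob_compl_eq_zero_iff measurableSet_Iic).mpr hIic
      rw [measure_mono_null (by simpa using hj) hout, binomial_singleton,
        Nat.choose_eq_zero_of_lt hj]
      simp

lemma integral_natCast_binomial (m : ℕ) (p : I) : ∫ j, (j : ℝ) ∂binomial m p = m * p := by
  -- `∑ ν C(m, ν) p^ν (1 - p)^(m - ν) = m p` is the identity `∑ ν • B_{m,ν} = m • X` at `p`.
  rw [integral_binomial, ← Nat.range_succ_eq_Iic]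
  simpa [Polynomial.eval_finsetSum, bernsteinPolynomial, mul_comm, mul_left_comm] using
    congrArg (Polynomial.eval (p : ℝ)) (bernsteinPolynomial.sum_smul ℝ m)

lemma integral_div_sub_half_of_hasLaw_binomial [IsProbabilityMeasure μ] {k : Ω → ℕ} {m : ℕ}
    (hm : m ≠ 0) {p : I} (hk : HasLaw k (binomial m p) μ) :
    ∫ ω, ((k ω : ℝ) / m - 1 / 2) ∂μ = p - 1 / 2 := by
  rw [← Function.comp_def (fun j : ℕ => (j : ℝ) / m - 1 / 2) k, hk.integral_comp .of_discrete,
    integral_sub (integrable_binomial _) (integrable_const _), integral_div,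
    integral_natCast_binomial]
  simp [hm]

lemma integral_add_one_div_two_of_eq_one_or_neg_one {η : Ω → ℝ} (hη : Measurable η)
    (hval : ∀ ω, η ω = 1 ∨ η ω = -1) :
    ∫ ω, (η ω + 1) / 2 ∂μ = μ.real {ω | η ω = 1} := by
  have hind : (fun ω => (η ω + 1) / 2) = {ω | η ω = 1}.indicator 1 := by
    funext ω
    rcases hval ω with h | h <;> norm_num [Set.indicator, h]
  rw [hind]
  exact integral_indicator_one (hη (measurableSet_singleton 1))

lemma measureReal_sum_le_sum_integral_sub_le [IsProbabilityMeasure μ] {ι : Type*} [Fintype ι]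
    {X : ι → Ω → ℝ} (hind : iIndepFun X μ) (hX : ∀ i, AEMeasurable (X i) μ) {a b : ℝ}
    (hab : ∀ i, ∀ᵐ ω ∂μ, X i ω ∈ Set.Icc a b) {ε : ℝ} (hε : 0 ≤ ε) :
    μ.real {ω | ∑ i, X i ω ≤ ∑ i, μ[X i] - ε} ≤
      Real.exp (-2 * ε ^ 2 / (Fintype.card ι * (b - a) ^ 2)) := by
  have hindY : iIndepFun (fun i ω => μ[X i] - X i ω) μ := by
    have h := hind.comp (fun i (y : ℝ) => μ[X i] - y) fun i => measurable_const.sub measurable_id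
    exact h
  have hsubG : ∀ i ∈ Finset.univ,
      HasSubgaussianMGF (fun ω => μ[X i] - X i ω) ((‖b - a‖₊ / 2) ^ 2) μ := fun i _ =>
    (hasSubgaussianMGF_of_mem_Icc (hX i) (hab i)).neg.congr
      (ae_of_all _ fun ω => by simp)
  have h := HasSubgaussianMGF.measure_sum_ge_le_of_iIndepFun hindY hsubG hε
  have hset : {ω | ε ≤ ∑ i, (μ[X i] - X i ω)} = {ω | ∑ i, X i ω ≤ ∑ i, μ[X i] - ε} := by
    ext ω
    simp only [Set.mem_ofPred, Finset.sum_sub_distrib]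
    constructor <;> intro <;> linarith
  rw [hset] at h
  convert h using 2
  simp only [Finset.sum_const, Finset.card_univ, nsmul_eq_mul, NNReal.coe_mul, NNReal.coe_natCast,
    NNReal.coe_pow, NNReal.coe_div, coe_nnnorm, Real.norm_eq_abs, NNReal.coe_ofNat, div_pow, sq_abs]
  rw [show (2 : ℝ) * (Fintype.card ι * ((b - a) ^ 2 / 2 ^ 2)) = Fintype.card ι * (b - a) ^ 2 / 2 by
    ring, div_div_eq_mul_div]
  ring

end ProbabilityTheory

lemma integral_empirical_weight_mul_vote {Ω : Type*} [MeasurableSpace Ω] {μ : Measure Ω}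
    [IsProbabilityMeasure μ] {k : Ω → ℕ} {η : Ω → ℝ} {m : ℕ}
    (hm : m ≠ 0) {p : I} (hk : HasLaw k (binomial m p) μ) (hη : Measurable η)
    (hval : ∀ ω, η ω = 1 ∨ η ω = -1) (hprob : μ.real {ω | η ω = 1} = p) (hind : IndepFun η k μ) :
    ∫ ω, ((k ω : ℝ) / m - 1 / 2) * ((η ω + 1) / 2 - 1 / 2) ∂μ = (p - 1 / 2) ^ 2 := by
  have hB : ∫ ω, ((η ω + 1) / 2 - 1 / 2) ∂μ = p - 1 / 2 := by
    rw [integral_sub ((integrable_const 1).mono' (by fun_prop) (ae_of_all _ fun ω => by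
      rcases hval ω with h | h <;> simp [h])) (integrable_const _),
      integral_add_one_div_two_of_eq_one_or_neg_one hη hval, hprob]
    simp
  have hAB := hind.symm.comp (φ := fun j : ℕ => (j : ℝ) / m - 1 / 2)
    (ψ := fun x : ℝ => (x + 1) / 2 - 1 / 2) .of_discrete (by fun_prop)
  have hmul := hAB.integral_fun_mul_eq_mul_integral
    ((measurable_of_countable _).comp_aemeasurable hk.aemeasurable).aestronglyMeasurable
    (by fun_prop)
  simp only [Function.comp_apply] at hmul
  rw [hmul, integral_div_sub_half_of_hasLaw_binomial hm hk, hB]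
  ring

theorem low_confidence_error_bound_general
    {Ω : Type*} [MeasurableSpace Ω] (μ : Measure Ω) [IsProbabilityMeasure μ]
    (n : ℕ)
    (p : Fin n → ℝ) (hp : ∀ i, p i ∈ Set.Ioo (0 : ℝ) 1)
    (η : Fin n → Ω → ℝ)
    (hηmeas : ∀ i, Measurable (η i))
    (hηval : ∀ i ω, η i ω = 1 ∨ η i ω = -1)
    (hηprob : ∀ i, μ {ω | η i ω = 1} = ENNReal.ofReal (p i))
    (m : Fin n → ℕ) (hm : ∀ i, 1 ≤ m i)
    (k : Fin n → Ω → ℕ) (hkmeas : ∀ i, Measurable (k i))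
    (hbinom : ∀ i j, j ≤ m i → μ {ω | k i ω = j} =
        ENNReal.ofReal ((m i).choose j * p i ^ j * (1 - p i) ^ (m i - j)))
    (hind : iIndepFun (fun i ω => (η i ω, k i ω)) μ)
    (hindin : ∀ i, IndepFun (η i) (k i) μ) :
    μ {ω | ∑ i, ((k i ω : ℝ) / (m i : ℝ) - 1/2) * ((η i ω + 1) / 2 - 1/2) ≤ 0} ≤
      ENNReal.ofReal (Real.exp (-(8 / (n : ℝ)) * (∑ i, (p i - 1/2) ^ 2) ^ 2)) := by
  let X : Fin n → Ω → ℝ := fun i ω => ((k i ω : ℝ) / m i - 1 / 2) * ((η i ω + 1) / 2 - 1 / 2)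
  have hlaw : ∀ i, HasLaw (k i) (binomial (m i) ⟨p i, Set.Ioo_subset_Icc_self (hp i)⟩) μ :=
    fun i => hasLaw_binomial_of_measure_eq (hkmeas i) (hbinom i)
  have hmean : ∀ i, μ[X i] = (p i - 1 / 2) ^ 2 := fun i =>
    integral_empirical_weight_mul_vote (Nat.one_le_iff_ne_zero.mp (hm i)) (hlaw i) (hηmeas i) (hηval i)
      (by rw [measureReal_def, hηprob i, ENNReal.toReal_ofReal (hp i).1.le]) (hindin i)
  have hbound : ∀ i, ∀ᵐ ω ∂μ, X i ω ∈ Set.Icc (-1 / 4) (1 / 4) := fun i => by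
    filter_upwards [ae_le_of_hasLaw_binomial (hlaw i)] with ω hω
    exact mul_mem_Icc_of_le_of_eq_one_or_neg_one hω (hηval i ω)
  have hindX : iIndepFun X μ := by
    have h := hind.comp (fun i (q : ℝ × ℕ) => ((q.2 : ℝ) / m i - 1 / 2) * ((q.1 + 1) / 2 - 1 / 2))
      fun i => by fun_prop
    exact h
  have hoeffding := measureReal_sum_le_sum_integral_sub_le hindX (fun i => by fun_prop) hbound
    (ε := ∑ i, (p i - 1 / 2) ^ 2) (Finset.sum_nonneg fun i _ => sq_nonneg _)
  simp only [hmean, sub_self, Fintype.card_fin] at hoeffding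
  rw [← ofReal_measureReal]
  refine ENNReal.ofReal_le_ofReal (hoeffding.trans_eq ?_)
  congr 1
  ring

/-- Low-confidence error bound: with empirical competences `p̂ i = k i / m i`
(`k i ~ Binomial(m i, p i)`, mutually independent and independent of the correctness
indicators), the low-confidence rule with weights `ŵ i = p̂ i − 1/2` errs with
probability at most `exp(−(8/n)(∑ (p i − 1/2)²)²)`.  Here `ξ i = (η i + 1)/2` is the
`{0,1}`-valued correctness indicator.  Independence is expressed by: the pairs
`(η i, k i)` are mutually independent across `i`, and within each pair `η i` and `k i`
are independent. -/
theorem low_confidence_error_bound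
    {Ω : Type*} [MeasurableSpace Ω] (μ : Measure Ω) [IsProbabilityMeasure μ]
    (n : ℕ) (hn : 1 ≤ n)
    (p : Fin n → ℝ) (hp : ∀ i, p i ∈ Set.Ioo (0 : ℝ) 1)
    (η : Fin n → Ω → ℝ)
    (hηmeas : ∀ i, Measurable (η i))
    (hηval : ∀ i ω, η i ω = 1 ∨ η i ω = -1)
    (hηprob : ∀ i, μ {ω | η i ω = 1} = ENNReal.ofReal (p i))
    (m : Fin n → ℕ) (hm : ∀ i, 1 ≤ m i)
    (k : Fin n → Ω → ℕ) (hkmeas : ∀ i, Measurable (k i))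
    (hbinom : ∀ i j, j ≤ m i → μ {ω | k i ω = j} =
        ENNReal.ofReal ((m i).choose j * p i ^ j * (1 - p i) ^ (m i - j)))
    (hind : iIndepFun (fun i ω => (η i ω, k i ω)) μ)
    (hindin : ∀ i, IndepFun (η i) (k i) μ) :
    μ {ω | ∑ i, ((k i ω : ℝ) / (m i : ℝ) - 1/2) * ((η i ω + 1) / 2 - 1/2) ≤ 0} ≤
      ENNReal.ofReal (Real.exp (-(8 / (n : ℝ)) * (∑ i, (p i - 1/2) ^ 2) ^ 2)) :=
  low_confidence_error_bound_general μ n p hp η hηmeas hηval hηprob m hm k hkmeas hbinom hind hindin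
end

section
/- Lemma 7 (perturbation of log-odds weights): let 0 < ε ≤ 5 and set ε̃ = (√(4ε+1) − 1)/4. Let p, p̂ ∈ (0,1), q = 1 − p, q̂ = 1 − p̂, w = log(p/q) and ŵ = log(p̂/q̂). If 1 − ε̃ ≤ p̂/p ≤ 1 + ε̃ and 1 − ε̃ ≤ q̂/q ≤ 1 + ε̃, then |w − ŵ| ≤ ε. -/
/-! The difference of the log-odds is `w − ŵ = log (q̂/q) − log (p̂/p)`, a difference of two
numbers in `[log (1 − ε̃), log (1 + ε̃)]`, so `|w − ŵ| ≤ log ((1 + ε̃)/(1 − ε̃))`. Since `ε ≤ 5`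
forces `ε̃ ≤ 9/10`, the polynomial bound `(1 + x)/(1 − x) ≤ (1 + x/2 + x²)⁴` on `[0, 9/10]`
together with `log u ≤ u − 1` gives `log ((1 + ε̃)/(1 − ε̃)) ≤ 4 (ε̃/2 + ε̃²) = ε`. -/

open Real Set

noncomputable def epsTilde (ε : ℝ) : ℝ := (√(4 * ε + 1) - 1) / 4

lemma epsTilde_nonneg {ε : ℝ} (hε : 0 ≤ ε) : 0 ≤ epsTilde ε := by
  have : 1 ≤ √(4 * ε + 1) := one_le_sqrt.mpr (by linarith)
  unfold epsTilde
  linarith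

lemma two_mul_epsTilde_add_four_mul_sq {ε : ℝ} (hε : -1 / 4 ≤ ε) :
    2 * epsTilde ε + 4 * epsTilde ε ^ 2 = ε := by
  have := sq_sqrt (show 0 ≤ 4 * ε + 1 by linarith)
  unfold epsTilde
  linear_combination this / 4

lemma epsTilde_le_nine_tenths {ε : ℝ} (hε : -1 / 4 ≤ ε) (h5 : ε ≤ 5) : epsTilde ε ≤ 9 / 10 := by
  have hsum := two_mul_epsTilde_add_four_mul_sq hε
  have hlo : -1 / 4 ≤ epsTilde ε := by
    unfold epsTilde
    linarith [sqrt_nonneg (4 * ε + 1)]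
  nlinarith

lemma one_add_le_one_sub_mul_pow_four {x : ℝ} (h0 : 0 ≤ x) (h9 : x ≤ 9 / 10) :
    1 + x ≤ (1 - x) * (1 + x / 2 + x ^ 2) ^ 4 := by
  nlinarith [mul_nonneg h0 h0, mul_nonneg (mul_nonneg h0 h0) h0,
    mul_nonneg (mul_nonneg (mul_nonneg h0 h0) h0) h0,
    sq_nonneg x, sq_nonneg (x * x), sq_nonneg (x * x * x),
    mul_nonneg (sub_nonneg.mpr h9) (mul_nonneg (mul_nonneg h0 h0) h0),
    mul_nonneg (sub_nonneg.mpr h9) (mul_nonneg (mul_nonneg (mul_nonneg h0 h0) h0) h0),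
    mul_nonneg (mul_nonneg (sub_nonneg.mpr h9) (sub_nonneg.mpr h9))
      (mul_nonneg (mul_nonneg h0 h0) h0)]

lemma log_one_add_sub_log_one_sub_le {x : ℝ} (h0 : 0 ≤ x) (h9 : x ≤ 9 / 10) :
    log (1 + x) - log (1 - x) ≤ 2 * x + 4 * x ^ 2 := by
  have hu : 0 < 1 + x / 2 + x ^ 2 := by positivity
  have hpow : log (1 + x) ≤ log (1 - x) + 4 * log (1 + x / 2 + x ^ 2) := by
    have h := log_le_log (by linarith) (one_add_le_one_sub_mul_pow_four h0 h9)
    rwa [log_mul (by linarith) (by positivity), log_pow, Nat.cast_ofNat] at h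
  linarith [log_le_sub_one_of_pos hu]

lemma abs_log_sub_log_le_of_mem_Icc {x a b : ℝ} (hx : x < 1)
    (ha : a ∈ Icc (1 - x) (1 + x)) (hb : b ∈ Icc (1 - x) (1 + x)) :
    |log a - log b| ≤ log (1 + x) - log (1 - x) := by
  have hpos : 0 < 1 - x := by linarith
  rw [abs_le]
  constructor <;> linarith [log_le_log hpos ha.1, log_le_log (hpos.trans_le ha.1) ha.2,
    log_le_log hpos hb.1, log_le_log (hpos.trans_le hb.1) hb.2]

lemma log_div_sub_log_div {a b c d : ℝ} (ha : a ≠ 0) (hb : b ≠ 0) (hc : c ≠ 0) (hd : d ≠ 0) :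
    log (a / b) - log (c / d) = log (d / b) - log (c / a) := by
  rw [log_div ha hb, log_div hc hd, log_div hd hb, log_div hc ha]
  ring

/-- Lemma 7 (perturbation of log-odds weights): for `0 < ε ≤ 5` and
`ε̃ = (√(4ε+1) − 1)/4`, if `p̂/p` and `q̂/q` both lie in `[1 − ε̃, 1 + ε̃]`
then the log-odds weights satisfy `|w − ŵ| ≤ ε`. -/
theorem log_odds_perturbation
    (ε : ℝ) (hε0 : 0 < ε) (hε5 : ε ≤ 5)
    (ε' : ℝ) (hε' : ε' = (Real.sqrt (4 * ε + 1) - 1) / 4)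
    (p phat : ℝ) (hp : p ∈ Set.Ioo (0 : ℝ) 1) (hphat : phat ∈ Set.Ioo (0 : ℝ) 1)
    (q qhat : ℝ) (hq : q = 1 - p) (hqhat : qhat = 1 - phat)
    (w what : ℝ) (hw : w = Real.log (p / q)) (hwhat : what = Real.log (phat / qhat))
    (hplo : 1 - ε' ≤ phat / p) (hphi : phat / p ≤ 1 + ε')
    (hqlo : 1 - ε' ≤ qhat / q) (hqhi : qhat / q ≤ 1 + ε') :
    |w - what| ≤ ε := by
  obtain rfl : ε' = epsTilde ε := hε'
  obtain ⟨hp0, hp1⟩ := hp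
  obtain ⟨hphat0, hphat1⟩ := hphat
  have hε'9 := epsTilde_le_nine_tenths (by linarith) hε5
  have hdiff : w - what = log (qhat / q) - log (phat / p) := by
    subst hw hwhat hq hqhat
    exact log_div_sub_log_div hp0.ne' (by linarith) hphat0.ne' (by linarith)
  calc |w - what| = |log (qhat / q) - log (phat / p)| := by rw [hdiff]
    _ ≤ log (1 + epsTilde ε) - log (1 - epsTilde ε) :=
      abs_log_sub_log_le_of_mem_Icc (by linarith) ⟨hqlo, hqhi⟩ ⟨hplo, hphi⟩
    _ ≤ 2 * epsTilde ε + 4 * epsTilde ε ^ 2 :=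
      log_one_add_sub_log_one_sub_le (epsTilde_nonneg hε0.le) hε'9
    _ = ε := two_mul_epsTilde_add_four_mul_sq (by linarith)
end

section
/- Corollary 8 (uniform weight estimation): in the estimation model, let 0 < δ < 1, 0 < ε ≤ 5 and ε̃ = (√(4ε+1) − 1)/4. If ε̃²·m_i·min{p_i, q_i} ≥ 3·log(4n/δ) for every i ∈ [n], then P( max_{i∈[n]} |w_i − ŵ_i| > ε ) ≤ δ, where w_i = log(p_i/q_i) and ŵ_i = log(p̂_i/(1 − p̂_i)). -/
/-!
The moment generating functions of `k - m p` and of `m p - k` are dominated by those of centred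
Poisson variables of means `m p` and `m (1 - p)`. Chernoff's method, applied to the one with the
smaller mean `c = m min(p, 1 - p)`, gives `P(|k - m p| > x c) ≤ 2 exp(-x² c / 3)` for
`0 ≤ x < 1`. Off this event `p̂ / p` and `(1 - p̂) / (1 - p)` both lie in `[1 - x, 1 + x]`, so
the plug-in weight is within `log ((1 + x) / (1 - x)) ≤ 2x + 4x²` of the true one. For `x = ε̃`
we have `2ε̃ + 4ε̃² = ε`, the hypothesis makes each tail probability at most `δ / (2n)`, and a
union bound over the `n` experts finishes the proof.
-/

open MeasureTheory ProbabilityTheory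

/-- The plug-in (empirical) Nitzan–Paroush weight `ŵ = log(p̂/(1 − p̂))`, viewed as an
extended real: it is `−∞` when `p̂ = 0` and `+∞` when `p̂ = 1`. -/
noncomputable def plugInWeight (x : ℝ) : EReal :=
  if x = 0 then ⊥ else if x = 1 then ⊤ else ((Real.log (x / (1 - x)) : ℝ) : EReal)

open Real Finset unitInterval

lemma sq_div_three_le_add_one_mul_log_add_one_sub {x : ℝ} (hx0 : 0 ≤ x) (hx1 : x ≤ 1) :
    x ^ 2 / 3 ≤ (1 + x) * log (1 + x) - x := by
  have h := le_log_one_add_of_nonneg hx0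
  rw [div_le_iff₀ (by linarith)] at h
  nlinarith

lemma sq_div_two_le_one_sub_mul_log_one_sub_add {x : ℝ} (hx0 : 0 ≤ x) (hx1 : x < 1) :
    x ^ 2 / 2 ≤ (1 - x) * log (1 - x) + x := by
  set s := (x - x ^ 2 / 2) / (1 - x)
  have hx1' : 0 < 1 - x := by linarith
  have hs : s * (1 - x) = x - x ^ 2 / 2 := div_mul_cancel₀ _ hx1'.ne'
  have hs0 : 0 ≤ s := div_nonneg (by nlinarith) hx1'.le
  have hexp : exp (-s) ≤ 1 - x := by
    rw [exp_neg, inv_le_iff_one_le_mul₀ (exp_pos s)]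
    nlinarith [quadratic_le_exp_of_nonneg hs0]
  have hlog : -s ≤ log (1 - x) := (le_log_iff_exp_le hx1').2 hexp
  nlinarith

section PoissonTail

variable {Ω : Type*} [MeasurableSpace Ω] {μ : Measure Ω} [IsFiniteMeasure μ] {Y : Ω → ℝ}
  {c x : ℝ}

lemma measureReal_ge_le_of_mgf_le (hc : 0 ≤ c) (hx0 : 0 ≤ x) (hx1 : x ≤ 1)
    (hint : ∀ t, Integrable (fun ω => exp (t * Y ω)) μ)
    (hmgf : ∀ t, mgf Y μ t ≤ exp (c * (exp t - 1 - t))) :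
    μ.real {ω | x * c ≤ Y ω} ≤ exp (-(x ^ 2 * c / 3)) := by
  set t := log (1 + x)
  have hx : 0 < 1 + x := by linarith
  calc μ.real {ω | x * c ≤ Y ω} ≤ exp (-t * (x * c)) * mgf Y μ t :=
        measure_ge_le_exp_mul_mgf _ (log_nonneg (by linarith)) (hint t)
    _ ≤ exp (-t * (x * c)) * exp (c * (exp t - 1 - t)) := by gcongr; exact hmgf t
    _ = exp (-(c * ((1 + x) * t - x))) := by rw [← exp_add, exp_log hx]; ring_nf
    _ ≤ exp (-(x ^ 2 * c / 3)) := by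
        gcongr
        nlinarith [sq_div_three_le_add_one_mul_log_add_one_sub hx0 hx1]

lemma measureReal_le_neg_le_of_mgf_le (hc : 0 ≤ c) (hx0 : 0 ≤ x) (hx1 : x < 1)
    (hint : ∀ t, Integrable (fun ω => exp (t * Y ω)) μ)
    (hmgf : ∀ t, mgf Y μ t ≤ exp (c * (exp t - 1 - t))) :
    μ.real {ω | Y ω ≤ -(x * c)} ≤ exp (-(x ^ 2 * c / 2)) := by
  set t := log (1 - x)
  have hx : 0 < 1 - x := by linarith
  calc μ.real {ω | Y ω ≤ -(x * c)} ≤ exp (-t * -(x * c)) * mgf Y μ t :=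
        measure_le_le_exp_mul_mgf _ (log_nonpos hx.le (by linarith)) (hint t)
    _ ≤ exp (-t * -(x * c)) * exp (c * (exp t - 1 - t)) := by gcongr; exact hmgf t
    _ = exp (-(c * ((1 - x) * t + x))) := by rw [← exp_add, exp_log hx]; ring_nf
    _ ≤ exp (-(x ^ 2 * c / 2)) := by
        gcongr
        nlinarith [sq_div_two_le_one_sub_mul_log_one_sub_add hx0 hx1]

lemma measureReal_lt_abs_le_of_mgf_le (hc : 0 ≤ c) (hx0 : 0 ≤ x) (hx1 : x < 1)
    (hint : ∀ t, Integrable (fun ω => exp (t * Y ω)) μ)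
    (hmgf : ∀ t, mgf Y μ t ≤ exp (c * (exp t - 1 - t))) :
    μ.real {ω | x * c < |Y ω|} ≤ 2 * exp (-(x ^ 2 * c / 3)) := by
  have hsub : {ω | x * c < |Y ω|} ⊆ {ω | x * c ≤ Y ω} ∪ {ω | Y ω ≤ -(x * c)} := by
    intro ω (hω : x * c < |Y ω|)
    rcases lt_abs.1 hω with h | h
    · exact Or.inl h.le
    · exact Or.inr (show Y ω ≤ -(x * c) by linarith)
  have hlower : exp (-(x ^ 2 * c / 2)) ≤ exp (-(x ^ 2 * c / 3)) := by
    gcongr; nlinarith [sq_nonneg x]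
  calc μ.real {ω | x * c < |Y ω|}
      ≤ μ.real {ω | x * c ≤ Y ω} + μ.real {ω | Y ω ≤ -(x * c)} :=
        (measureReal_mono hsub).trans (measureReal_union_le _ _)
    _ ≤ 2 * exp (-(x ^ 2 * c / 3)) := by
        linarith [measureReal_ge_le_of_mgf_le hc hx0 hx1.le hint hmgf,
          measureReal_le_neg_le_of_mgf_le hc hx0 hx1 hint hmgf]

end PoissonTail

lemma pow_le_exp_mul_exp_sub_one {θ : ℝ} (hθ0 : 0 ≤ θ) (hθ1 : θ ≤ 1) (a : ℝ) (m : ℕ) :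
    (θ * exp a + (1 - θ)) ^ m ≤ exp (m * θ * (exp a - 1)) := by
  calc (θ * exp a + (1 - θ)) ^ m ≤ exp (θ * (exp a - 1)) ^ m := by
        gcongr
        linarith [add_one_le_exp (θ * (exp a - 1))]
    _ = exp (m * θ * (exp a - 1)) := by rw [← exp_nat_mul, mul_assoc]

section Binomial

variable {m : ℕ} {θ : I}

lemma integral_exp_binomial (a b : ℝ) :
    ∫ j, exp (a * j + b) ∂binomial m θ = exp b * (θ * exp a + (1 - θ)) ^ m := by
  rw [integral_binomial, ← Nat.range_succ_eq_Iic, add_pow, mul_sum]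
  refine sum_congr rfl fun j _ => ?_
  rw [smul_eq_mul, exp_add, mul_pow, ← exp_nat_mul, mul_comm a]
  ring

lemma mgf_binomial_sub_le (t : ℝ) :
    mgf (fun j : ℕ => (j : ℝ) - m * θ) (binomial m θ) t ≤ exp (m * θ * (exp t - 1 - t)) := by
  calc mgf (fun j : ℕ => (j : ℝ) - m * θ) (binomial m θ) t
      = exp (-(t * (m * θ))) * (θ * exp t + (1 - θ)) ^ m := by
        rw [mgf, ← integral_exp_binomial]; congr with j; ring_nf
    _ ≤ exp (-(t * (m * θ))) * exp (m * θ * (exp t - 1)) := by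
        gcongr; exact pow_le_exp_mul_exp_sub_one θ.2.1 θ.2.2 t m
    _ = exp (m * θ * (exp t - 1 - t)) := by rw [← exp_add]; ring_nf

lemma mgf_sub_binomial_le (t : ℝ) :
    mgf (fun j : ℕ => m * θ - (j : ℝ)) (binomial m θ) t ≤
      exp (m * (1 - θ) * (exp t - 1 - t)) := by
  -- reflection `j ↦ m - j`, which exchanges `θ` and `1 - θ`
  have hbase : θ * exp (-t) + (1 - θ) = exp (-t) * ((1 - θ) * exp t + (1 - (1 - θ))) := by
    rw [exp_neg]; field_simp; ring
  calc mgf (fun j : ℕ => m * θ - (j : ℝ)) (binomial m θ) t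
      = exp (t * (m * θ)) * exp (-t) ^ m * ((1 - θ) * exp t + (1 - (1 - θ))) ^ m := by
        rw [mgf, mul_assoc, ← mul_pow, ← hbase, ← integral_exp_binomial]; congr with j; ring_nf
    _ ≤ exp (t * (m * θ)) * exp (-t) ^ m * exp (m * (1 - θ) * (exp t - 1)) := by
        gcongr; exact pow_le_exp_mul_exp_sub_one (by linarith [θ.2.2]) (by linarith [θ.2.1]) t m
    _ = exp (m * (1 - θ) * (exp t - 1 - t)) := by
        rw [← exp_nat_mul, ← exp_add, ← exp_add]; ring_nf

lemma binomial_real_lt_abs_sub_le {x : ℝ} (hx0 : 0 ≤ x) (hx1 : x < 1) :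
    (binomial m θ).real {j | x * (m * min (θ : ℝ) (1 - θ)) < |(j : ℝ) - m * θ|} ≤
      2 * exp (-(x ^ 2 * (m * min (θ : ℝ) (1 - θ)) / 3)) := by
  have hint (f : ℕ → ℝ) (t : ℝ) : Integrable (fun j => exp (t * f j)) (binomial m θ) :=
    integrable_binomial _
  rcases le_total (θ : ℝ) (1 - θ) with h | h
  · rw [min_eq_left h]
    exact measureReal_lt_abs_le_of_mgf_le (mul_nonneg m.cast_nonneg θ.2.1) hx0 hx1 (hint _)
      mgf_binomial_sub_le
  · rw [min_eq_right h]
    simp_rw [abs_sub_comm _ ((m : ℝ) * θ)]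
    exact measureReal_lt_abs_le_of_mgf_le (by nlinarith [θ.2.2]) hx0 hx1 (hint _)
      mgf_sub_binomial_le

lemma hasLaw_binomial_of_measure_eq {Ω : Type*} [MeasurableSpace Ω] {μ : Measure Ω}
    [IsProbabilityMeasure μ] {k : Ω → ℕ} (hk : Measurable k)
    (h : ∀ j ≤ m, μ {ω | k ω = j} = ENNReal.ofReal (m.choose j * θ ^ j * (1 - θ) ^ (m - j))) :
    HasLaw k (binomial m θ) μ := by
  -- both measures are carried by `Iic m`, on whose points they agree
  refine ⟨hk.aemeasurable, Measure.ext_of_singleton fun j => ?_⟩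
  have hle : ∀ j ≤ m, μ.map k {j} = binomial m θ {j} := fun j hj => by
    rw [Measure.map_apply hk (measurableSet_singleton _), binomial_singleton]; exact h j hj
  have hIic : ∀ ν : Measure ℕ, ν (Set.Iic m) = ∑ j ∈ Iic m, ν {j} := fun ν => by
    rw [sum_measure_singleton, coe_Iic]
  have hbin : binomial m θ (Set.Iic m) = 1 :=
    (prob_compl_eq_zero_iff measurableSet_Iic).1 (ae_le_of_hasLaw_binomial HasLaw.id)
  have hmap : μ.map k (Set.Iic m) = 1 := by
    rw [hIic, sum_congr rfl fun j hj => hle j (mem_Iic.1 hj), ← hIic, hbin]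
  rcases le_or_gt j m with hj | hj
  · exact hle j hj
  · have hnull (ν : Measure ℕ) [IsProbabilityMeasure ν] (hν : ν (Set.Iic m) = 1) : ν {j} = 0 :=
      measure_mono_null (by simpa using hj) ((prob_compl_eq_zero_iff measurableSet_Iic).2 hν)
    have := Measure.isProbabilityMeasure_map (μ := μ) hk.aemeasurable
    rw [hnull _ hmap, hnull _ hbin]

lemma measure_lt_abs_sub_le_of_hasLaw_binomial {Ω : Type*} [MeasurableSpace Ω] {μ : Measure Ω}
    {k : Ω → ℕ} (hk : HasLaw k (binomial m θ) μ) {x : ℝ} (hx0 : 0 ≤ x) (hx1 : x < 1) :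
    μ {ω | x * (m * min (θ : ℝ) (1 - θ)) < |(k ω : ℝ) - m * θ|} ≤
      ENNReal.ofReal (2 * exp (-(x ^ 2 * (m * min (θ : ℝ) (1 - θ)) / 3))) := by
  rw [hk.measure_eq (p := fun j : ℕ => x * (m * min (θ : ℝ) (1 - θ)) < |(j : ℝ) - m * θ|)
    .of_discrete, ← ofReal_measureReal]
  exact ENNReal.ofReal_le_ofReal (binomial_real_lt_abs_sub_le hx0 hx1)

end Binomial

lemma log_one_add_div_one_sub_le {x : ℝ} (hx0 : 0 ≤ x) (hx : x ≤ 9 / 10) :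
    log ((1 + x) / (1 - x)) ≤ 2 * x + 4 * x ^ 2 := by
  have hexp := sum_le_exp_of_nonneg (x := 2 * x + 4 * x ^ 2) (by positivity) 4
  norm_num [sum_range_succ, Nat.factorial] at hexp
  have h2 : x ^ 2 ≤ 81 / 100 := by nlinarith
  -- `(1 - x) * T(2x + 4x²) - (1 + x)` is `x²` times this quintic, `T` the cubic Taylor
  -- polynomial of `exp`
  have hR : 0 ≤ 4 + 10 / 3 * x + 20 / 3 * x ^ 2 - 16 / 3 * x ^ 4 - 32 / 3 * x ^ 5 := by
    nlinarith [pow_nonneg hx0 3, mul_le_mul_of_nonneg_right h2 (pow_nonneg hx0 2),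
      mul_le_mul_of_nonneg_right h2 (pow_nonneg hx0 3)]
  rw [log_le_iff_le_exp (by apply div_pos <;> linarith), div_le_iff₀ (by linarith)]
  nlinarith [mul_le_mul_of_nonneg_right hexp (by linarith : (0 : ℝ) ≤ 1 - x),
    mul_nonneg (sq_nonneg x) hR]

lemma div_mem_Icc_of_abs_sub_le {r p x : ℝ} (hp : 0 < p) (h : |r - p| ≤ x * p) :
    r / p ∈ Set.Icc (1 - x) (1 + x) := by
  rw [abs_le] at h
  exact ⟨(le_div_iff₀ hp).2 (by linarith), (div_le_iff₀ hp).2 (by linarith)⟩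

lemma abs_log_sub_log_le {a b x : ℝ} (hx : x < 1) (ha : a ∈ Set.Icc (1 - x) (1 + x))
    (hb : b ∈ Set.Icc (1 - x) (1 + x)) : |log a - log b| ≤ log ((1 + x) / (1 - x)) := by
  have hx' : 0 < 1 - x := by linarith
  have hx0 : 0 ≤ x := by linarith [ha.1.trans ha.2]
  have hlog {y : ℝ} (hy : y ∈ Set.Icc (1 - x) (1 + x)) :
      log (1 - x) ≤ log y ∧ log y ≤ log (1 + x) :=
    ⟨log_le_log hx' hy.1, log_le_log (hx'.trans_le hy.1) hy.2⟩
  rw [log_div (by linarith) hx'.ne', abs_sub_le_iff]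
  constructor <;> linarith [hlog ha, hlog hb]

lemma plugInWeight_mem_Icc {r p x : ℝ} (hp : p ∈ Set.Ioo 0 1) (hx : x < 1)
    (h : |r - p| ≤ x * min p (1 - p)) :
    plugInWeight r ∈ Set.Icc ((log (p / (1 - p)) - log ((1 + x) / (1 - x)) : ℝ) : EReal)
      ((log (p / (1 - p)) + log ((1 + x) / (1 - x)) : ℝ) : EReal) := by
  obtain ⟨hp0, hp1⟩ := hp
  have hq0 : 0 < 1 - p := by linarith
  have hx0 : 0 ≤ x := nonneg_of_mul_nonneg_left ((abs_nonneg _).trans h) (lt_min hp0 hq0)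
  have h₁ := div_mem_Icc_of_abs_sub_le hp0 (h.trans (by gcongr; exact min_le_left _ _))
  have h₂ : (1 - r) / (1 - p) ∈ Set.Icc (1 - x) (1 + x) := by
    refine div_mem_Icc_of_abs_sub_le hq0 ?_
    rw [abs_sub_comm, sub_sub_sub_cancel_left]
    exact h.trans (by gcongr; exact min_le_right _ _)
  have hr0 : 0 < r := (div_pos_iff_of_pos_right hp0).1 (by linarith [h₁.1])
  have hr1 : 0 < 1 - r := (div_pos_iff_of_pos_right hq0).1 (by linarith [h₂.1])
  have hlogit :
      log (r / (1 - r)) - log (p / (1 - p)) = log (r / p) - log ((1 - r) / (1 - p)) := by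
    rw [log_div hr0.ne' hr1.ne', log_div hp0.ne' hq0.ne', log_div hr0.ne' hp0.ne',
      log_div hr1.ne' hq0.ne']
    ring
  have hw : plugInWeight r = ((log (r / (1 - r)) : ℝ) : EReal) := by
    rw [plugInWeight, if_neg hr0.ne', if_neg (by linarith)]
  have habs := abs_log_sub_log_le hx h₁ h₂
  rw [← hlogit, abs_le] at habs
  rw [hw, Set.mem_Icc, EReal.coe_le_coe_iff, EReal.coe_le_coe_iff]
  constructor <;> linarith [habs.1, habs.2]

lemma plugInWeight_div_mem_Icc {k m : ℕ} {p x : ℝ} (hm : 0 < m) (hp : p ∈ Set.Ioo 0 1)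
    (hx0 : 0 ≤ x) (hx : x ≤ 9 / 10) (h : |(k : ℝ) - m * p| ≤ x * (m * min p (1 - p))) :
    plugInWeight (k / m) ∈ Set.Icc ((log (p / (1 - p)) - (2 * x + 4 * x ^ 2) : ℝ) : EReal)
      ((log (p / (1 - p)) + (2 * x + 4 * x ^ 2) : ℝ) : EReal) := by
  have hm0 : (0 : ℝ) < m := by exact_mod_cast hm
  have hr : |(k : ℝ) / m - p| ≤ x * min p (1 - p) := by
    rw [div_sub' hm0.ne', abs_div, abs_of_pos hm0, div_le_iff₀ hm0]
    linarith
  have hlog := log_one_add_div_one_sub_le hx0 hx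
  obtain ⟨hlo, hhi⟩ := plugInWeight_mem_Icc hp (by linarith) hr
  exact ⟨(EReal.coe_le_coe_iff.2 (by linarith)).trans hlo,
    hhi.trans (EReal.coe_le_coe_iff.2 (by linarith))⟩

lemma two_mul_exp_neg_div_three_le {A y : ℝ} (hA : 0 < A) (h : 3 * log A ≤ y) :
    2 * exp (-(y / 3)) ≤ 2 / A := by
  calc 2 * exp (-(y / 3)) ≤ 2 * exp (-log A) := by gcongr; linarith
    _ = 2 / A := by rw [exp_neg, exp_log hA, div_eq_mul_inv]

lemma two_mul_add_four_mul_sq_eq {ε : ℝ} (hε : 0 ≤ 4 * ε + 1) :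
    2 * ((√(4 * ε + 1) - 1) / 4) + 4 * ((√(4 * ε + 1) - 1) / 4) ^ 2 = ε := by
  linear_combination (sq_sqrt hε) / 4

theorem uniform_weight_estimation_general
    {Ω : Type*} [MeasurableSpace Ω] (μ : Measure Ω) [IsProbabilityMeasure μ]
    (n : ℕ) (hn : 1 ≤ n)
    (p : Fin n → ℝ) (hp : ∀ i, p i ∈ Set.Ioo (0 : ℝ) 1)
    (m : Fin n → ℕ) (hm : ∀ i, 1 ≤ m i)
    (k : Fin n → Ω → ℕ) (hkmeas : ∀ i, Measurable (k i))
    (hbinom : ∀ i j, j ≤ m i → μ {ω | k i ω = j} =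
        ENNReal.ofReal ((m i).choose j * p i ^ j * (1 - p i) ^ (m i - j)))
    (δ : ℝ) (hδ0 : 0 < δ)
    (ε : ℝ) (hε0 : 0 < ε) (hε5 : ε ≤ 5)
    (ε' : ℝ) (hε' : ε' = (Real.sqrt (4 * ε + 1) - 1) / 4)
    (w : Fin n → ℝ) (hw : ∀ i, w i = Real.log (p i / (1 - p i)))
    (hcond : ∀ i, 3 * Real.log (4 * n / δ) ≤ ε' ^ 2 * m i * min (p i) (1 - p i)) :
    μ {ω | ∃ i, plugInWeight ((k i ω : ℝ) / (m i : ℝ)) < ((w i - ε : ℝ) : EReal) ∨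
              ((w i + ε : ℝ) : EReal) < plugInWeight ((k i ω : ℝ) / (m i : ℝ))} ≤
      ENNReal.ofReal δ := by
  have hε : 2 * ε' + 4 * ε' ^ 2 = ε := hε' ▸ two_mul_add_four_mul_sq_eq (by linarith)
  have hε'0 : 0 ≤ ε' := by rw [hε']; linarith [one_le_sqrt.2 (by linarith : 1 ≤ 4 * ε + 1)]
  have hε'1 : ε' ≤ 9 / 10 := by nlinarith
  have hn0 : (0 : ℝ) < n := by exact_mod_cast hn
  set B : Fin n → Set Ω :=
    fun i => {ω | ε' * (m i * min (p i) (1 - p i)) < |(k i ω : ℝ) - m i * p i|}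
  have hB (i : Fin n) : μ (B i) ≤ ENNReal.ofReal (δ / (2 * n)) := by
    have hlaw := hasLaw_binomial_of_measure_eq (θ := ⟨p i, Set.Ioo_subset_Icc_self (hp i)⟩)
      (hkmeas i) (hbinom i)
    refine (measure_lt_abs_sub_le_of_hasLaw_binomial hlaw hε'0 (by linarith)).trans
      (ENNReal.ofReal_le_ofReal ?_)
    rw [show δ / (2 * n) = 2 / (4 * n / δ) by field_simp; ring]
    exact two_mul_exp_neg_div_three_le (by positivity) ((hcond i).trans_eq (mul_assoc _ _ _))
  have hsub : {ω | ∃ i, plugInWeight ((k i ω : ℝ) / (m i : ℝ)) < ((w i - ε : ℝ) : EReal) ∨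
      ((w i + ε : ℝ) : EReal) < plugInWeight ((k i ω : ℝ) / (m i : ℝ))} ⊆ ⋃ i, B i := by
    rintro ω ⟨i, hi⟩
    refine Set.mem_iUnion.2 ⟨i, ?_⟩
    by_contra hω
    obtain ⟨hlo, hhi⟩ := plugInWeight_div_mem_Icc (hm i) (hp i) hε'0 hε'1 (not_lt.1 hω)
    rw [hε, ← hw i] at hlo hhi
    exact hi.elim hlo.not_gt hhi.not_gt
  calc _ ≤ μ (⋃ i, B i) := measure_mono hsub
    _ ≤ ∑ i, μ (B i) := measure_iUnion_fintype_le μ B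
    _ ≤ ∑ _i : Fin n, ENNReal.ofReal (δ / (2 * n)) := sum_le_sum fun i _ => hB i
    _ = ENNReal.ofReal (δ / 2) := by
        rw [← ENNReal.ofReal_sum_of_nonneg fun _ _ => by positivity, sum_const, card_univ,
          Fintype.card_fin, nsmul_eq_mul]
        congr 1; field_simp
    _ ≤ ENNReal.ofReal δ := ENNReal.ofReal_le_ofReal (by linarith)

/-- Corollary 8 (uniform weight estimation): if
`ε̃² m i min{p i, q i} ≥ 3 log(4n/δ)` for every `i`, where `ε̃ = (√(4ε+1) − 1)/4`,
then with probability at least `1 − δ` every plug-in weight `ŵ i` is within `ε` of the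
true weight `w i` (the event `max_i |w i − ŵ i| > ε` is that some `ŵ i` falls outside
the interval `[w i − ε, w i + ε]` in the extended reals). -/
theorem uniform_weight_estimation
    {Ω : Type*} [MeasurableSpace Ω] (μ : Measure Ω) [IsProbabilityMeasure μ]
    (n : ℕ) (hn : 1 ≤ n)
    (p : Fin n → ℝ) (hp : ∀ i, p i ∈ Set.Ioo (0 : ℝ) 1)
    (m : Fin n → ℕ) (hm : ∀ i, 1 ≤ m i)
    (k : Fin n → Ω → ℕ) (hkmeas : ∀ i, Measurable (k i))
    (hbinom : ∀ i j, j ≤ m i → μ {ω | k i ω = j} =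
        ENNReal.ofReal ((m i).choose j * p i ^ j * (1 - p i) ^ (m i - j)))
    (hind : iIndepFun k μ)
    (δ : ℝ) (hδ0 : 0 < δ) (hδ1 : δ < 1)
    (ε : ℝ) (hε0 : 0 < ε) (hε5 : ε ≤ 5)
    (ε' : ℝ) (hε' : ε' = (Real.sqrt (4 * ε + 1) - 1) / 4)
    (w : Fin n → ℝ) (hw : ∀ i, w i = Real.log (p i / (1 - p i)))
    (hcond : ∀ i, 3 * Real.log (4 * n / δ) ≤ ε' ^ 2 * m i * min (p i) (1 - p i)) :
    μ {ω | ∃ i, plugInWeight ((k i ω : ℝ) / (m i : ℝ)) < ((w i - ε : ℝ) : EReal) ∨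
              ((w i + ε : ℝ) : EReal) < plugInWeight ((k i ω : ℝ) / (m i : ℝ))} ≤
      ENNReal.ofReal δ :=
  uniform_weight_estimation_general μ n hn p hp m hm k hkmeas hbinom δ hδ0 ε hε0 hε5 ε' hε' w hw
    hcond
end

section
/- Appendix inequality (key step in the concavity of F): for every x with 1/2 ≤ x < 1, 2x(1−x)·log(x/(1−x)) ≤ 2x − 1; consequently the function F(x) = x(1−x)·log(x/(1−x))/(2x−1) (extended by F(1/2) = 1/2) is concave on (0,1). -/
/-!
Substituting `t = 2x - 1`, one has `F x = 1/2 - D t` (`logitQuotient`, `defectSeries`) with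
`D t = ∑ₖ t ^ (2k + 2) / ((2k + 1)(2k + 3))`, obtained from the power series of
`log (1 + t) - log (1 - t)`. Being a nonnegative combination of even powers, `D` is nonnegative,
which is the inequality, and convex on `(-1, 1)`, which makes `F` concave.
-/

open Real Set

theorem ConvexOn.tsum {ι E : Type*} [AddCommMonoid E] [Module ℝ E] {s : Set E}
    {f : ι → E → ℝ} (hs : Convex ℝ s) (hf : ∀ i, ConvexOn ℝ s (f i))
    (hsum : ∀ x ∈ s, Summable fun i => f i x) : ConvexOn ℝ s fun x => ∑' i, f i x := by
  refine ⟨hs, fun x hx y hy a b ha hb hab => ?_⟩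
  have hx' := (hsum x hx).mul_left a
  have hy' := (hsum y hy).mul_left b
  calc ∑' i, f i (a • x + b • y) ≤ ∑' i, (a * f i x + b * f i y) :=
        Summable.tsum_le_tsum (fun i => (hf i).2 hx hy ha hb hab)
          (hsum _ (hs hx hy ha hb hab)) (hx'.add hy')
    _ = a • ∑' i, f i x + b • ∑' i, f i y := by
        rw [hx'.tsum_add hy', tsum_mul_left, tsum_mul_left, smul_eq_mul, smul_eq_mul]

noncomputable def defectCoeff (k : ℕ) : ℝ := ((2 * k + 1) * (2 * k + 3) : ℝ)⁻¹

lemma defectCoeff_nonneg (k : ℕ) : 0 ≤ defectCoeff k := by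
  unfold defectCoeff; positivity

lemma defectCoeff_le_one (k : ℕ) : defectCoeff k ≤ 1 := by
  unfold defectCoeff
  exact inv_le_one_of_one_le₀ (by nlinarith [k.cast_nonneg (α := ℝ)])

noncomputable def defectSeries (t : ℝ) : ℝ := ∑' k, defectCoeff k * t ^ (2 * k + 2)

lemma defectSeries_term_nonneg (k : ℕ) (t : ℝ) : 0 ≤ defectCoeff k * t ^ (2 * k + 2) :=
  mul_nonneg (defectCoeff_nonneg k) (Even.pow_nonneg ⟨k + 1, by ring⟩ t)

lemma summable_defectSeries {t : ℝ} (ht : |t| < 1) :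
    Summable fun k => defectCoeff k * t ^ (2 * k + 2) := by
  have hsq : t ^ 2 < 1 := by rwa [← sq_abs, sq_lt_one_iff₀ (abs_nonneg t)]
  refine (summable_geometric_of_lt_one (sq_nonneg t) hsq).of_nonneg_of_le
    (fun k => defectSeries_term_nonneg k t) fun k => ?_
  calc defectCoeff k * t ^ (2 * k + 2) ≤ 1 * t ^ (2 * k + 2) :=
        mul_le_mul_of_nonneg_right (defectCoeff_le_one k) (Even.pow_nonneg ⟨k + 1, by ring⟩ t)
    _ ≤ (t ^ 2) ^ k := by
        rw [one_mul, pow_add, pow_mul]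
        exact mul_le_of_le_one_right (by positivity) hsq.le

lemma defectSeries_nonneg (t : ℝ) : 0 ≤ defectSeries t :=
  tsum_nonneg fun k => defectSeries_term_nonneg k t

lemma convexOn_defectSeries : ConvexOn ℝ (Ioo (-1) 1) defectSeries := by
  refine ConvexOn.tsum (convex_Ioo _ _) (fun k => ?_) fun t ht => ?_
  · exact ((Even.convexOn_pow ⟨k + 1, by ring⟩).subset (subset_univ _) (convex_Ioo _ _)).smul
      (defectCoeff_nonneg k)
  · exact summable_defectSeries (abs_lt.2 ht)

/-- Telescoping after the partial fraction decomposition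
`defectCoeff k = (1 / (2k + 1) - 1 / (2k + 3)) / 2` reduces the sum to the series of
`log (1 + t) - log (1 - t)`. -/
lemma hasSum_defectSeries {t : ℝ} (ht : |t| < 1) (ht0 : t ≠ 0) :
    HasSum (fun k => defectCoeff k * t ^ (2 * k + 2))
      (1 / 2 - (1 - t ^ 2) / (4 * t) * (log (1 + t) - log (1 - t))) := by
  set L := log (1 + t) - log (1 - t)
  set u : ℕ → ℝ := fun k => t ^ (2 * k + 1) / (2 * k + 1)
  have hu : HasSum u (L / 2) := by
    have hu_eq : u = fun k : ℕ => 2 * (1 / (2 * k + 1)) * t ^ (2 * k + 1) / 2 := by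
      funext k
      simp only [u]
      ring
    rw [hu_eq]
    exact (hasSum_log_sub_log_of_abs_lt_one ht).div_const 2
  have hu_succ : HasSum (fun k => u (k + 1)) (L / 2 - t) := by
    simpa [u] using (hasSum_nat_add_iff' 1).2 hu
  have hterm : (fun k => defectCoeff k * t ^ (2 * k + 2))
      = fun k => t / 2 * u k - 1 / (2 * t) * u (k + 1) := by
    funext k
    simp only [u, defectCoeff]
    push_cast
    field_simp
    ring
  have hsum : 1 / 2 - (1 - t ^ 2) / (4 * t) * L = t / 2 * (L / 2) - 1 / (2 * t) * (L / 2 - t) := by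
    field_simp
    ring
  rw [hterm, hsum]
  exact (hu.mul_left _).sub (hu_succ.mul_left _)

noncomputable def logitQuotient (x : ℝ) : ℝ :=
  if x = 1 / 2 then 1 / 2 else x * (1 - x) * log (x / (1 - x)) / (2 * x - 1)

lemma logitQuotient_eq_half_sub_defectSeries {x : ℝ} (hx : x ∈ Ioo 0 1) :
    logitQuotient x = 1 / 2 - defectSeries (2 * x - 1) := by
  obtain ⟨hx0, hx1⟩ := hx
  by_cases hhalf : x = 1 / 2
  · simp [logitQuotient, hhalf, defectSeries]
  have ht : |2 * x - 1| < 1 := abs_lt.2 ⟨by linarith, by linarith⟩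
  have ht0 : 2 * x - 1 ≠ 0 := fun h => hhalf (by linarith)
  have h1x : 1 - x ≠ 0 := by linarith
  have hlog : log (1 + (2 * x - 1)) - log (1 - (2 * x - 1)) = log (x / (1 - x)) := by
    rw [← log_div (by linarith) (by linarith)]
    congr 1
    rw [div_eq_div_iff (by linarith) h1x]
    ring
  rw [defectSeries, (hasSum_defectSeries ht ht0).tsum_eq, hlog, logitQuotient, if_neg hhalf]
  field_simp
  ring

lemma logitQuotient_le_half {x : ℝ} (hx : x ∈ Ioo 0 1) : logitQuotient x ≤ 1 / 2 := by
  rw [logitQuotient_eq_half_sub_defectSeries hx]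
  linarith [defectSeries_nonneg (2 * x - 1)]

lemma concaveOn_logitQuotient : ConcaveOn ℝ (Ioo 0 1) logitQuotient := by
  set g : ℝ →ᵃ[ℝ] ℝ := AffineMap.lineMap (-1) 1
  have hg : ∀ x, g x = 2 * x - 1 := fun x => by
    rw [AffineMap.lineMap_apply_ring']
    ring
  have hpre : g ⁻¹' Ioo (-1) 1 = Ioo 0 1 := by
    ext x
    simp only [mem_preimage, hg, mem_Ioo]
    constructor <;> rintro ⟨h1, h2⟩ <;> constructor <;> linarith
  have hconv := convexOn_defectSeries.comp_affineMap g
  rw [hpre] at hconv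
  refine ((concaveOn_const (1 / 2 : ℝ) (convex_Ioo 0 1)).sub hconv).congr fun x hx => ?_
  rw [logitQuotient_eq_half_sub_defectSeries hx, Pi.sub_apply, Function.comp_apply, hg]

/-- Appendix inequality: for `1/2 ≤ x < 1`, `2x(1−x)log(x/(1−x)) ≤ 2x − 1`; consequently
the function `F(x) = x(1−x)log(x/(1−x))/(2x−1)` (extended by `F(1/2) = 1/2`) is concave
on `(0,1)`. -/
theorem appendix_inequality_and_concavity :
    (∀ x : ℝ, 1/2 ≤ x → x < 1 →
      2 * x * (1 - x) * Real.log (x / (1 - x)) ≤ 2 * x - 1) ∧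
    ConcaveOn ℝ (Set.Ioo (0 : ℝ) 1)
      (fun x : ℝ => if x = 1/2 then 1/2
        else x * (1 - x) * Real.log (x / (1 - x)) / (2 * x - 1)) := by
  refine ⟨fun x hx hx1 => ?_, concaveOn_logitQuotient⟩
  rcases hx.eq_or_lt with rfl | hx
  · norm_num
  have hle := logitQuotient_le_half ⟨by linarith, hx1⟩
  rw [logitQuotient, if_neg hx.ne', div_le_iff₀ (by linarith)] at hle
  linarith
end
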